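/- arXiv:2102.03801 — 12 statements merged into one kernel-verified Lean document; each statement's English description precedes it below -/
import Mathlib

section
/- Let Γ ∈ (1,2] be a real constant. For every real η > -1/2, one has (ηΓ + 1)^(1/Γ) ≥ (2η + 1)^(1/2). -/
theorem min_entropy_power_ineq (Γ η : ℝ) (hΓ1 : 1 < Γ) (hΓ2 : Γ ≤ 2)
    (hη : -(1/2) < η) :
    (2 * η + 1) ^ ((1 : ℝ)/2) ≤ (η * Γ + 1) ^ (1/Γ) := by
  have hΓ0 : (0:ℝ) < Γ := by linarith
  have hs : (-1 : ℝ) ≤ 2 * η := by linarith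
  have key : ((1 : ℝ) + 2 * η) ^ (Γ/2) ≤ 1 + (Γ/2) * (2 * η) :=
    rpow_one_add_le_one_add_mul_self hs (by positivity) (by linarith)
  have h0 : (0:ℝ) ≤ 1 + 2 * η := by linarith
  have hmono := Real.rpow_le_rpow (Real.rpow_nonneg h0 _) key
    (le_of_lt (by positivity : (0:ℝ) < 1/Γ))
  rw [← Real.rpow_mul h0] at hmono
  have : Γ / 2 * (1 / Γ) = 1/2 := by field_simp
  rw [this] at hmono
  calc (2 * η + 1) ^ ((1:ℝ)/2) = (1 + 2*η) ^ ((1:ℝ)/2) := by ring_nf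
    _ ≤ (1 + Γ/2 * (2*η)) ^ (1/Γ) := hmono
    _ = (η * Γ + 1) ^ (1/Γ) := by ring_nf
end

section
/- The function f(x) = (ηx + 1)^(1/x) is nonincreasing on the interval (1,2] for any fixed η > -1/2; more precisely its derivative satisfies f'(x) ≤ 0 for all x ∈ (1,2]. -/
/-!
Writing `u = η x + 1 > 0`, logarithmic differentiation gives
`f'(x) = f(x) / (x² u) · (η x - u log u)`, and `η x = u - 1 ≤ u log u`.
-/

open Real Set

theorem Convex.antitoneOn_and_deriv_nonpos_of_hasDerivAt {f f' : ℝ → ℝ} {s : Set ℝ}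
    (hs : Convex ℝ s) (hf : ∀ x ∈ s, HasDerivAt f (f' x) x) (hf' : ∀ x ∈ s, f' x ≤ 0) :
    AntitoneOn f s ∧ ∀ x ∈ s, deriv f x ≤ 0 := by
  have hderiv : ∀ x ∈ s, deriv f x ≤ 0 := fun x hx => (hf x hx).deriv ▸ hf' x hx
  refine ⟨antitoneOn_of_deriv_nonpos hs ?_ ?_ fun x hx => hderiv x (interior_subset hx), hderiv⟩
  · exact fun x hx => (hf x hx).continuousAt.continuousWithinAt
  · exact fun x hx => (hf x (interior_subset hx)).differentiableAt.differentiableWithinAt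

theorem HasDerivAt.rpow_one_div {g : ℝ → ℝ} {g' x : ℝ} (hg : HasDerivAt g g' x)
    (hgx : 0 < g x) (hx : x ≠ 0) :
    HasDerivAt (fun y => g y ^ (1 / y))
      (g x ^ (1 / x) / (x ^ 2 * g x) * (x * g' - g x * Real.log (g x))) x := by
  have hinv : HasDerivAt (fun y : ℝ => 1 / y) (-(1 / x ^ 2)) x := by
    simpa only [one_div] using hasDerivAt_inv hx
  convert hg.rpow hinv hgx using 1
  rw [rpow_sub hgx, rpow_one]
  field_simp
  ring

theorem f_antitone_and_deriv_nonpos (η : ℝ) (hη : -(1/2) < η) :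
    AntitoneOn (fun x : ℝ => (η * x + 1) ^ (1/x)) (Set.Ioc 1 2) ∧
    ∀ x ∈ Set.Ioc (1 : ℝ) 2, deriv (fun x : ℝ => (η * x + 1) ^ (1/x)) x ≤ 0 := by
  have hbase : ∀ x ∈ Ioc (1 : ℝ) 2, 0 < η * x + 1 := by
    rintro x ⟨h1, h2⟩
    rcases le_or_gt 0 η with h | h <;> nlinarith
  have hderiv : ∀ x ∈ Ioc (1 : ℝ) 2, HasDerivAt (fun x : ℝ => (η * x + 1) ^ (1/x))
      ((η * x + 1) ^ (1 / x) / (x ^ 2 * (η * x + 1)) *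
        (x * η - (η * x + 1) * log (η * x + 1))) x := fun x hx =>
    HasDerivAt.rpow_one_div (by simpa using ((hasDerivAt_id x).const_mul η).add_const 1)
      (hbase x hx) (by linarith [hx.1])
  refine (convex_Ioc 1 2).antitoneOn_and_deriv_nonpos_of_hasDerivAt hderiv fun x hx => ?_
  have hx0 : 0 < x := by linarith [hx.1]
  have hu := hbase x hx
  have hlog := self_sub_one_le_mul_log hu.le
  exact mul_nonpos_of_nonneg_of_nonpos (by positivity) (by linarith)
end

section
/- Let Γ ∈ (1,2] and let v, v* ∈ ℝ^d with ‖v‖ < 1 and ‖v*‖ < 1. Then Γ(1 - v·v*)/(1 - ‖v‖²) - Γ + 1 ≥ (√(1-‖v‖²)/√(1-‖v*‖²))^(-Γ). -/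
open scoped RealInnerProductSpace

theorem lorentz_entropy_key_ineq {d : ℕ} (hd : 1 ≤ d) (Γ : ℝ)
    (hΓ1 : 1 < Γ) (hΓ2 : Γ ≤ 2)
    (v vs : EuclideanSpace ℝ (Fin d)) (hv : ‖v‖ < 1) (hvs : ‖vs‖ < 1) :
    (Real.sqrt (1 - ‖v‖^2) / Real.sqrt (1 - ‖vs‖^2)) ^ (-Γ)
      ≤ Γ * (1 - ⟪v, vs⟫) / (1 - ‖v‖^2) - Γ + 1 := by
  set x := ‖v‖ with hx
  set y := ‖vs‖ with hy
  have hx0 : 0 ≤ x := norm_nonneg v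
  have hy0 : 0 ≤ y := norm_nonneg vs
  have ha : (0:ℝ) < 1 - x^2 := by nlinarith
  have hb : (0:ℝ) < 1 - y^2 := by nlinarith
  have hc : ⟪v, vs⟫ ≤ x * y := real_inner_le_norm v vs
  have hr : (0:ℝ) ≤ (1 - x^2)/(1 - y^2) := by positivity
  -- rewrite LHS as ((1-y^2)/(1-x^2))^(Γ/2)
  have hL : (Real.sqrt (1 - x^2) / Real.sqrt (1 - y^2)) ^ (-Γ)
      = ((1 - y^2)/(1 - x^2)) ^ (Γ/2) := by
    rw [← Real.sqrt_div ha.le, Real.sqrt_eq_rpow, ← Real.rpow_mul hr,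
      show (1/2:ℝ) * (-Γ) = -(Γ/2) by ring, Real.rpow_neg hr,
      ← Real.inv_rpow hr, inv_div]
  rw [hL]
  -- Bernoulli: r^(Γ/2) ≤ 1 + (Γ/2)(r-1)
  have hs : (-1:ℝ) ≤ (1 - y^2)/(1 - x^2) - 1 := by
    have : (0:ℝ) ≤ (1 - y^2)/(1 - x^2) := by positivity
    linarith
  have hber := rpow_one_add_le_one_add_mul_self hs
    (by linarith : (0:ℝ) ≤ Γ/2) (by linarith : Γ/2 ≤ 1)
  have hber' : ((1 - y^2)/(1 - x^2)) ^ (Γ/2)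
      ≤ 1 + (Γ/2) * ((1 - y^2)/(1 - x^2) - 1) := by
    simpa using hber
  refine hber'.trans ?_
  have key : Γ/2 * ((1 - y^2)/(1 - x^2) - 1) ≤ Γ * (1 - ⟪v, vs⟫)/(1 - x^2) - Γ := by
    rw [div_sub_one ha.ne', div_sub' ha.ne', ← mul_div_assoc,
      div_le_div_iff₀ ha ha]
    have hΓ0 : (0:ℝ) ≤ Γ := by linarith
    nlinarith [mul_nonneg (mul_nonneg hΓ0 (sq_nonneg (x - y))) ha.le,
      mul_le_mul_of_nonneg_right (mul_le_mul_of_nonneg_left hc hΓ0) ha.le]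
  linarith [key]
end

section
/- Let ρ > 0, p > 0 and v ∈ ℝ^d with ‖v‖ < 1, and define the RHD state U = (D, m, E) by W = 1/√(1-‖v‖²), h = 1 + Γp/((Γ-1)ρ), D = ρW, m = ρhW²v, E = ρhW² - p. If p ≥ e^σ ρ^Γ, then for every v* in the open unit ball of ℝ^d and every ρ* > 0, φ_σ(U; v*, ρ*) ≥ 0, where φ_σ(U; v*, ρ*) = E - m·v* - D√(1-‖v*‖²) + e^σ (ρ*^Γ - (Γ/(Γ-1)) D ρ*^{Γ-1} √(1-‖v*‖²)). -/
open scoped RealInnerProductSpace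

/-- The linear functional `φ_σ(U; v*, ρ*)` from the equivalent form of the invariant region. -/
noncomputable def phi {d : ℕ} (Γ σ : ℝ) (U : ℝ × EuclideanSpace ℝ (Fin d) × ℝ)
    (vs : EuclideanSpace ℝ (Fin d)) (ρs : ℝ) : ℝ :=
  U.2.2 - ⟪U.2.1, vs⟫ - U.1 * Real.sqrt (1 - ‖vs‖^2)
    + Real.exp σ * (ρs ^ Γ - Γ / (Γ - 1) * U.1 * ρs ^ (Γ - 1) * Real.sqrt (1 - ‖vs‖^2))

/-- The RHD conservative state `U = (D, m, E)` built from the primitive variables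
`(ρ, v, p)` via `W = 1/√(1-‖v‖²)`, `h = 1 + Γp/((Γ-1)ρ)`, `D = ρW`, `m = ρhW²v`,
`E = ρhW² - p`. -/
noncomputable def stateOf {d : ℕ} (Γ ρ p : ℝ) (v : EuclideanSpace ℝ (Fin d)) :
    ℝ × EuclideanSpace ℝ (Fin d) × ℝ :=
  (ρ * (1 / Real.sqrt (1 - ‖v‖^2)),
   (ρ * (1 + Γ * p / ((Γ - 1) * ρ)) * (1 / Real.sqrt (1 - ‖v‖^2))^2) • v,
   ρ * (1 + Γ * p / ((Γ - 1) * ρ)) * (1 / Real.sqrt (1 - ‖v‖^2))^2 - p)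

/-- The `i`-th RHD flux `F_i(U) = (D v_i, v_i m + p e_i, m_i)`, expressed via the
primitive variables `(ρ, v, p)` of the state `U = stateOf Γ ρ p v`. -/
noncomputable def fluxOf {d : ℕ} (Γ ρ p : ℝ) (v : EuclideanSpace ℝ (Fin d)) (i : Fin d) :
    ℝ × EuclideanSpace ℝ (Fin d) × ℝ :=
  ((stateOf Γ ρ p v).1 * v i,
   v i • (stateOf Γ ρ p v).2.1 + p • EuclideanSpace.single i (1 : ℝ),
   (stateOf Γ ρ p v).2.1 i)


private lemma young_aux {Γ q r : ℝ} (hΓ : 1 < Γ) (hq : 0 < q) (hr : 0 < r) :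
    Γ * q * r ^ (Γ - 1) ≤ (Γ - 1) * r ^ Γ + q ^ Γ := by
  have hΓ0 : (0:ℝ) < Γ := by linarith
  have h := Real.geom_mean_le_arith_mean2_weighted
    (div_nonneg (by linarith) hΓ0.le) (by positivity)
    (Real.rpow_nonneg hr.le Γ) (Real.rpow_nonneg hq.le Γ)
    (by field_simp; ring : (Γ-1)/Γ + 1/Γ = 1)
  have h1 : (r ^ Γ) ^ ((Γ-1)/Γ) = r ^ (Γ-1) := by
    rw [← Real.rpow_mul hr.le]
    congr 1
    field_simp
  have h2 : (q ^ Γ) ^ (1/Γ) = q := by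
    rw [← Real.rpow_mul hq.le]
    rw [mul_one_div, div_self hΓ0.ne', Real.rpow_one]
  rw [h1, h2] at h
  have h3 := mul_le_mul_of_nonneg_left h hΓ0.le
  calc Γ * q * r ^ (Γ-1) = Γ * (r ^ (Γ-1) * q) := by ring
    _ ≤ Γ * ((Γ-1)/Γ * r^Γ + 1/Γ * q^Γ) := h3
    _ = (Γ-1) * r^Γ + q^Γ := by field_simp

private lemma pow_bound {Γ x : ℝ} (hΓ1 : 1 < Γ) (hΓ2 : Γ ≤ 2) (hx : 0 < x) :
    x ^ Γ ≤ 1 + Γ / 2 * (x ^ 2 - 1) := by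
  have h := Real.geom_mean_le_arith_mean2_weighted
    (by linarith : (0:ℝ) ≤ Γ/2) (by linarith : (0:ℝ) ≤ 1 - Γ/2)
    (sq_nonneg x) zero_le_one (by ring)
  have h1 : (x ^ 2) ^ (Γ/2) = x ^ Γ := by
    rw [← Real.rpow_natCast x 2, ← Real.rpow_mul hx.le]
    congr 1; ring
  rw [h1, Real.one_rpow, mul_one] at h
  linarith

set_option maxHeartbeats 1000000 in
theorem entropy_bound_implies_phi_nonneg {d : ℕ} (hd : 1 ≤ d) (Γ σ ρ p : ℝ)
    (v : EuclideanSpace ℝ (Fin d)) (hΓ1 : 1 < Γ) (hΓ2 : Γ ≤ 2)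
    (hρ : 0 < ρ) (hp : 0 < p) (hv : ‖v‖ < 1)
    (hS : Real.exp σ * ρ ^ Γ ≤ p)
    (vs : EuclideanSpace ℝ (Fin d)) (hvs : ‖vs‖ < 1) (ρs : ℝ) (hρs : 0 < ρs) :
    0 ≤ phi Γ σ (stateOf Γ ρ p v) vs ρs := by
  have hΓ0 : (0:ℝ) < Γ := by linarith
  have hΓm : (0:ℝ) < Γ - 1 := by linarith
  have ha0 : 0 ≤ ‖v‖ := norm_nonneg v
  have hb0 : 0 ≤ ‖vs‖ := norm_nonneg vs
  have h1a : 0 < 1 - ‖v‖^2 := by nlinarith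
  have h1b : 0 < 1 - ‖vs‖^2 := by nlinarith
  simp only [phi, stateOf, real_inner_smul_left]
  set sq1 : ℝ := Real.sqrt (1 - ‖v‖^2) with hsq1
  set s : ℝ := Real.sqrt (1 - ‖vs‖^2) with hsdef
  set e : ℝ := Real.exp σ with hedef
  have hsq1pos : 0 < sq1 := Real.sqrt_pos.mpr h1a
  have hspos : 0 < s := Real.sqrt_pos.mpr h1b
  have hsq1sq : sq1^2 = 1 - ‖v‖^2 := Real.sq_sqrt h1a.le
  have hssq : s^2 = 1 - ‖vs‖^2 := Real.sq_sqrt h1b.le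
  have hepos : 0 < e := Real.exp_pos σ
  set W : ℝ := 1 / sq1 with hWdef
  have hWpos : 0 < W := by positivity
  have hWsq : W^2 * (1 - ‖v‖^2) = 1 := by
    rw [hWdef, div_pow, one_pow, hsq1sq]
    exact one_div_mul_cancel h1a.ne'
  set ip : ℝ := inner ℝ v vs with hipdef
  have hip : 2 * ip ≤ ‖v‖^2 + ‖vs‖^2 := by
    have h := real_inner_le_norm v vs
    nlinarith [sq_nonneg (‖v‖ - ‖vs‖)]
  set A : ℝ := W^2 * (1 - ip) with hA
  set x : ℝ := W * s with hx
  clear_value sq1 s e W ip A x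
  have hxpos : 0 < x := by rw [hx]; exact mul_pos hWpos hspos
  have hx2 : x^2 * (1 - ‖v‖^2) = 1 - ‖vs‖^2 := by
    calc x^2 * (1 - ‖v‖^2) = (W^2 * (1 - ‖v‖^2)) * s^2 := by rw [hx]; ring
      _ = s^2 := by rw [hWsq, one_mul]
      _ = 1 - ‖vs‖^2 := hssq
  have hA2 : A * (1 - ‖v‖^2) = 1 - ip := by
    calc A * (1 - ‖v‖^2) = (W^2 * (1 - ‖v‖^2)) * (1 - ip) := by rw [hA]; ring
      _ = 1 - ip := by rw [hWsq, one_mul]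
  have hAx2 : (1 + x^2)/2 ≤ A := by
    have hkey : ((1 + x^2)/2) * (1 - ‖v‖^2) ≤ A * (1 - ‖v‖^2) := by
      rw [hA2]
      nlinarith
    exact le_of_mul_le_mul_right hkey h1a
  have hAx : x ≤ A := by nlinarith [sq_nonneg (x - 1), hAx2]
  have hxΓpos : 0 < x ^ Γ := Real.rpow_pos_of_pos hxpos Γ
  have hρΓpos : 0 < ρ ^ Γ := Real.rpow_pos_of_pos hρ Γ
  have F6 : x ^ Γ ≤ Γ * A - (Γ - 1) := by
    have h1 := mul_le_mul_of_nonneg_left hAx2 hΓ0.le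
    have h2 := pow_bound hΓ1 hΓ2 hxpos
    linarith
  have G3 : e * (ρ ^ Γ * x ^ Γ) ≤ p * (Γ * A - (Γ - 1)) := by
    have h1 : e * (ρ ^ Γ * x ^ Γ) ≤ (e * ρ ^ Γ) * (Γ * A - (Γ - 1)) := by
      have := mul_le_mul_of_nonneg_left F6 (by positivity : (0:ℝ) ≤ e * ρ ^ Γ)
      linarith
    have h2 : (e * ρ ^ Γ) * (Γ * A - (Γ - 1)) ≤ p * (Γ * A - (Γ - 1)) :=
      mul_le_mul_of_nonneg_right hS (le_trans hxΓpos.le F6)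
    linarith
  have F1 : Γ * (ρ * x) * ρs ^ (Γ - 1) ≤ (Γ - 1) * ρs ^ Γ + ρ ^ Γ * x ^ Γ := by
    have h := young_aux hΓ1 (mul_pos hρ hxpos) hρs
    rwa [Real.mul_rpow hρ.le hxpos.le] at h
  have G2 : 0 ≤ (Γ - 1) * ρ * (A - x) := by
    have : 0 ≤ A - x := by linarith
    positivity
  have key : ∀ X : ℝ, (Γ - 1) * X = (Γ - 1) * ρ * (A - x)
      + (p * (Γ * A - (Γ - 1)) - e * (ρ ^ Γ * x ^ Γ))
      + e * ((Γ - 1) * ρs ^ Γ + ρ ^ Γ * x ^ Γ - Γ * (ρ * x) * ρs ^ (Γ - 1)) → 0 ≤ X := by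
    intro X hX
    have h0 : 0 ≤ (Γ - 1) * X := by
      rw [hX]
      have h1 : 0 ≤ p * (Γ * A - (Γ - 1)) - e * (ρ ^ Γ * x ^ Γ) := by linarith
      have h2 : 0 ≤ e * ((Γ - 1) * ρs ^ Γ + ρ ^ Γ * x ^ Γ - Γ * (ρ * x) * ρs ^ (Γ - 1)) := by
        have : 0 ≤ (Γ - 1) * ρs ^ Γ + ρ ^ Γ * x ^ Γ - Γ * (ρ * x) * ρs ^ (Γ - 1) := by linarith
        positivity
      linarith
    have h1 : (Γ - 1) * 0 ≤ (Γ - 1) * X := by simpa using h0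
    exact le_of_mul_le_mul_left h1 hΓm
  apply key
  rw [hA, hx, hWdef]
  field_simp
  ring
end

section
/- With notation as in the RHD primitive-to-conservative map (ρ > 0, p > 0, ‖v‖ < 1, W = 1/√(1-‖v‖²), h = 1 + Γp/((Γ-1)ρ), D = ρW, m = ρhW²v, E = ρhW² - p), for every v* in the open unit ball, the coefficient Π₁ := (Γ/(Γ-1))·(1 - v·v*)/(1-‖v‖²) - 1 is strictly positive when Γ ∈ (1,2]. -/
open scoped RealInnerProductSpace

lemma two_le_div_sub_one {Γ : ℝ} (hΓ1 : 1 < Γ) (hΓ2 : Γ ≤ 2) : 2 ≤ Γ / (Γ - 1) := by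
  rw [le_div_iff₀ (by linarith)]
  linarith

/-- `2 (1 - ⟪v, w⟫) - (1 - ‖v‖²) = (1 - ‖v‖)² + 2 (‖v‖ - ⟪v, w⟫)`, and both summands are
nonnegative by Cauchy–Schwarz, the first one strictly. -/
lemma one_sub_sq_norm_lt_two_mul_one_sub_inner {E : Type*} [NormedAddCommGroup E]
    [InnerProductSpace ℝ E] {v w : E} (hv : ‖v‖ < 1) (hw : ‖w‖ ≤ 1) :
    1 - ‖v‖ ^ 2 < 2 * (1 - ⟪v, w⟫) := by
  have hinner : ⟪v, w⟫ ≤ ‖v‖ := by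
    calc ⟪v, w⟫ ≤ ‖v‖ * ‖w‖ := real_inner_le_norm v w
      _ ≤ ‖v‖ * 1 := by gcongr
      _ = ‖v‖ := mul_one _
  have hgap : 0 < (1 - ‖v‖) ^ 2 := by
    have : 0 < 1 - ‖v‖ := by linarith
    positivity
  nlinarith

theorem Pi1_pos {d : ℕ} (Γ : ℝ) (hΓ1 : 1 < Γ) (hΓ2 : Γ ≤ 2)
    (v vs : EuclideanSpace ℝ (Fin d)) (hv : ‖v‖ < 1) (hvs : ‖vs‖ < 1) :
    0 < Γ / (Γ - 1) * ((1 - ⟪v, vs⟫) / (1 - ‖v‖^2)) - 1 := by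
  have hden : 0 < 1 - ‖v‖ ^ 2 := by nlinarith [norm_nonneg v]
  have hratio : 1 / 2 < (1 - ⟪v, vs⟫) / (1 - ‖v‖ ^ 2) := by
    rw [lt_div_iff₀ hden]
    linarith [one_sub_sq_norm_lt_two_mul_one_sub_inner hv hvs.le]
  have hratio_pos : 0 ≤ (1 - ⟪v, vs⟫) / (1 - ‖v‖ ^ 2) := by linarith
  have hgt_one : 1 < Γ / (Γ - 1) * ((1 - ⟪v, vs⟫) / (1 - ‖v‖ ^ 2)) :=
    calc (1 : ℝ) = 2 * (1 / 2) := by norm_num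
      _ < 2 * ((1 - ⟪v, vs⟫) / (1 - ‖v‖ ^ 2)) := by gcongr
      _ ≤ Γ / (Γ - 1) * ((1 - ⟪v, vs⟫) / (1 - ‖v‖ ^ 2)) := by
        gcongr
        exact two_le_div_sub_one hΓ1 hΓ2
  linarith
end

section
/- Let Γ ∈ (1,2], v, v* in the open unit ball of ℝ^d, and define φ(x) = x^{-Γ} - (Γ/(Γ-1))·(√(1-‖v*‖²)/√(1-‖v‖²))·x^{-Γ+1} + Γ(1 - v·v*)/((Γ-1)(1-‖v‖²)) - 1 for x > 0. Then φ attains its minimum over (0,∞) at x_s = √(1-‖v‖²)/√(1-‖v*‖²), and φ(x_s) ≥ 0. -/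
/-!
Write `k = √(1 - ‖v*‖²) / √(1 - ‖v‖²)`, so that `φ x = x^(-Γ) - Γ/(Γ-1) k x^(1-Γ) + const`
and `x_s = k⁻¹`. Multiplying by `(Γ - 1) x^Γ`, minimality at `k⁻¹` becomes Bernoulli's
inequality `(k x)^Γ ≥ 1 + Γ (k x - 1)`, and the minimum value is
`(Γ c - (Γ - 1) - k^Γ) / (Γ - 1)` with `c = (1 - v·v*) / (1 - ‖v‖²)`. For `Γ ∈ [1, 2]` the
power `k^Γ` lies below the chord `(2 - Γ) k + (Γ - 1) k²`, while `c ≥ k` (Cauchy–Schwarz)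
and `2c ≥ 1 + k²` (`‖v - v*‖² ≥ 0`).
-/

open scoped RealInnerProductSpace

noncomputable def powerPart (Γ k x : ℝ) : ℝ :=
  x ^ (-Γ) - Γ / (Γ - 1) * k * x ^ (-Γ + 1)

lemma powerPart_inv_self {Γ k : ℝ} (hΓ : Γ ≠ 1) (hk : 0 < k) :
    powerPart Γ k k⁻¹ = -(k ^ Γ / (Γ - 1)) := by
  have hΓ' : Γ - 1 ≠ 0 := sub_ne_zero.mpr hΓ
  have h₁ : k⁻¹ ^ (-Γ) = k ^ Γ := by rw [Real.inv_rpow hk.le, Real.rpow_neg hk.le, inv_inv]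
  have h₂ : k * k⁻¹ ^ (-Γ + 1) = k ^ Γ := by
    rw [Real.inv_rpow hk.le, ← Real.rpow_neg hk.le, neg_add, neg_neg, ← sub_eq_add_neg,
      Real.rpow_sub_one hk.ne']
    field_simp
  rw [powerPart, h₁, mul_assoc, h₂]
  field_simp
  ring

lemma isMinOn_powerPart {Γ k : ℝ} (hΓ : 1 < Γ) (hk : 0 < k) :
    IsMinOn (powerPart Γ k) (Set.Ioi 0) k⁻¹ := by
  intro x (hx : 0 < x)
  have hΓ' : 0 < Γ - 1 := sub_pos.mpr hΓ
  have bernoulli : 1 + Γ * (k * x - 1) ≤ (k * x) ^ Γ := by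
    simpa using one_add_mul_self_le_rpow_one_add (s := k * x - 1)
      (by nlinarith [mul_pos hk hx]) hΓ.le
  have expand : powerPart Γ k x - powerPart Γ k k⁻¹
      = ((k * x) ^ Γ - (1 + Γ * (k * x - 1))) / ((Γ - 1) * x ^ Γ) := by
    rw [powerPart_inv_self hΓ.ne' hk, powerPart, Real.rpow_neg hx.le, Real.rpow_add hx,
      Real.rpow_neg hx.le, Real.rpow_one, Real.mul_rpow hk.le hx.le]
    field_simp
    ring
  show powerPart Γ k k⁻¹ ≤ powerPart Γ k x
  rw [← sub_nonneg, expand]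
  exact div_nonneg (sub_nonneg.mpr bernoulli) (by positivity)

lemma rpow_le_sub_add_mul_sq {Γ k : ℝ} (hΓ₁ : 1 ≤ Γ) (hΓ₂ : Γ ≤ 2) (hk : 0 ≤ k) :
    k ^ Γ ≤ (2 - Γ) * k + (Γ - 1) * k ^ 2 := by
  have h := rpow_one_add_le_one_add_mul_self (s := k - 1) (by linarith)
    (sub_nonneg.mpr hΓ₁) (by linarith)
  rw [add_sub_cancel] at h
  calc k ^ Γ = k * k ^ (Γ - 1) := by
        rw [← Real.rpow_one_add' hk (by linarith), add_sub_cancel]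
    _ ≤ k * (1 + (Γ - 1) * (k - 1)) := mul_le_mul_of_nonneg_left h hk
    _ = (2 - Γ) * k + (Γ - 1) * k ^ 2 := by ring

lemma rpow_le_of_le_of_one_add_sq_le {Γ k c : ℝ} (hΓ₁ : 1 ≤ Γ) (hΓ₂ : Γ ≤ 2) (hk : 0 ≤ k)
    (hkc : k ≤ c) (hc : 1 + k ^ 2 ≤ 2 * c) : k ^ Γ ≤ Γ * c - (Γ - 1) := by
  nlinarith [rpow_le_sub_add_mul_sq hΓ₁ hΓ₂ hk,
    mul_nonneg (sub_nonneg.mpr hΓ₂) (sub_nonneg.mpr hkc),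
    mul_nonneg (sub_nonneg.mpr hΓ₁) (sub_nonneg.mpr hc)]

lemma sqrt_one_sub_sq_mul_le {p q : ℝ} (hp : p ^ 2 ≤ 1) (hq : q ^ 2 ≤ 1) :
    √(1 - p ^ 2) * √(1 - q ^ 2) ≤ 1 - p * q := by
  rw [← Real.sqrt_mul (sub_nonneg.mpr hp)]
  apply Real.sqrt_le_iff.mpr
  constructor
  · nlinarith [sq_nonneg (p * q)]
  · nlinarith [sq_nonneg (p - q)]

section InnerProductSpace

variable {E : Type*} [NormedAddCommGroup E] [InnerProductSpace ℝ E] {v w : E}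

lemma sqrt_one_sub_sq_div_le (hv : ‖v‖ < 1) (hw : ‖w‖ ≤ 1) :
    √(1 - ‖w‖ ^ 2) / √(1 - ‖v‖ ^ 2) ≤ (1 - ⟪v, w⟫) / (1 - ‖v‖ ^ 2) := by
  have hA : 0 < 1 - ‖v‖ ^ 2 := by nlinarith [norm_nonneg v]
  have hsA : 0 < √(1 - ‖v‖ ^ 2) := Real.sqrt_pos.mpr hA
  have hAB := sqrt_one_sub_sq_mul_le (p := ‖v‖) (q := ‖w‖) (by nlinarith [norm_nonneg v])
    (by nlinarith [norm_nonneg w])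
  rw [div_le_div_iff₀ hsA hA]
  calc √(1 - ‖w‖ ^ 2) * (1 - ‖v‖ ^ 2)
        = √(1 - ‖v‖ ^ 2) * √(1 - ‖w‖ ^ 2) * √(1 - ‖v‖ ^ 2) := by
        rw [mul_right_comm, mul_comm, Real.mul_self_sqrt hA.le]
    _ ≤ (1 - ⟪v, w⟫) * √(1 - ‖v‖ ^ 2) := by
        gcongr
        linarith [real_inner_le_norm v w]

lemma one_add_sq_sqrt_one_sub_sq_div_le (hv : ‖v‖ < 1) (hw : ‖w‖ ≤ 1) :
    1 + (√(1 - ‖w‖ ^ 2) / √(1 - ‖v‖ ^ 2)) ^ 2 ≤ 2 * ((1 - ⟪v, w⟫) / (1 - ‖v‖ ^ 2)) := by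
  have hA : 0 < 1 - ‖v‖ ^ 2 := by nlinarith [norm_nonneg v]
  rw [div_pow, Real.sq_sqrt hA.le, Real.sq_sqrt (by nlinarith [norm_nonneg w]),
    one_add_div hA.ne', mul_div_assoc', div_le_div_iff_of_pos_right hA]
  nlinarith [norm_sub_sq_real v w, sq_nonneg ‖v - w‖]

end InnerProductSpace

theorem phi_aux_min_nonneg {d : ℕ} (Γ : ℝ) (hΓ1 : 1 < Γ) (hΓ2 : Γ ≤ 2)
    (v vs : EuclideanSpace ℝ (Fin d)) (hv : ‖v‖ < 1) (hvs : ‖vs‖ < 1) :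
    let φ : ℝ → ℝ := fun x =>
      x ^ (-Γ) - Γ / (Γ - 1) * (Real.sqrt (1 - ‖vs‖^2) / Real.sqrt (1 - ‖v‖^2)) * x ^ (-Γ + 1)
        + Γ * (1 - ⟪v, vs⟫) / ((Γ - 1) * (1 - ‖v‖^2)) - 1
    let xs : ℝ := Real.sqrt (1 - ‖v‖^2) / Real.sqrt (1 - ‖vs‖^2)
    (∀ x : ℝ, 0 < x → φ xs ≤ φ x) ∧ 0 ≤ φ xs := by
  intro φ xs
  set k := √(1 - ‖vs‖ ^ 2) / √(1 - ‖v‖ ^ 2)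
  set c := (1 - ⟪v, vs⟫) / (1 - ‖v‖ ^ 2) with hc_def
  have hk : 0 < k := div_pos (Real.sqrt_pos.mpr (by nlinarith [norm_nonneg vs]))
    (Real.sqrt_pos.mpr (by nlinarith [norm_nonneg v]))
  have hφ (x : ℝ) : φ x = powerPart Γ k x + Γ * c / (Γ - 1) - 1 := by
    change powerPart Γ k x + Γ * (1 - ⟪v, vs⟫) / ((Γ - 1) * (1 - ‖v‖ ^ 2)) - 1 = _
    rw [hc_def, mul_div_assoc', div_div, mul_comm (1 - ‖v‖ ^ 2)]
  have hxs : xs = k⁻¹ := (inv_div _ _).symm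
  refine ⟨fun x hx => ?_, ?_⟩
  · rw [hφ, hφ, hxs]
    linarith [isMinOn_iff.mp (isMinOn_powerPart hΓ1 hk) x hx]
  · have hkΓ : k ^ Γ ≤ Γ * c - (Γ - 1) := rpow_le_of_le_of_one_add_sq_le hΓ1.le hΓ2 hk.le
      (sqrt_one_sub_sq_div_le hv hvs.le) (one_add_sq_sqrt_one_sub_sq_div_le hv hvs.le)
    rw [hφ, hxs, powerPart_inv_self hΓ1.ne' hk, neg_add_eq_sub, ← sub_div, sub_nonneg,
      le_div_iff₀ (sub_pos.mpr hΓ1)]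
    linarith
end

section
/- Let Γ ∈ (1,2], σ ∈ ℝ, and let U be the RHD state with primitive variables (ρ, v, p) satisfying ρ > 0, ‖v‖ < 1, p ≥ e^σ ρ^Γ. Then for any θ ∈ [-1,1], any index i, any v* = (v_{1,*},…,v_{d,*}) in the open unit ball and any ρ* > 0, it holds that φ_σ(U + θ F_i(U); v*, ρ*) + θ e^σ v_{i,*} ρ*^Γ ≥ 0, where F_i(U) = (D v_i, v_i m + p e_i, m_i) is the i-th flux and φ_σ(U; v*, ρ*) = E - m·v* - D√(1-‖v*‖²) + e^σ (ρ*^Γ - (Γ/(Γ-1)) D ρ*^{Γ-1}√(1-‖v*‖²)). -/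
set_option maxHeartbeats 1000000

open scoped RealInnerProductSpace

/-- Bernoulli up: `Γ*r ≤ r^Γ + (Γ-1)` for `r ≥ 0`, `Γ ≥ 1`. -/
lemma gLF_bern_up {r Γ : ℝ} (hr : 0 ≤ r) (hΓ : 1 ≤ Γ) : Γ * r ≤ r ^ Γ + (Γ - 1) := by
  have h := one_add_mul_self_le_rpow_one_add (show (-1:ℝ) ≤ r - 1 by linarith) hΓ
  have hr' : (1 : ℝ) + (r - 1) = r := by ring
  rw [hr'] at h
  linarith

/-- Bernoulli down: `w^(Γ-1) ≤ (2-Γ) + (Γ-1)*w` for `w ≥ 0`, `1 ≤ Γ ≤ 2`. -/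
lemma gLF_bern_down {w Γ : ℝ} (hw : 0 ≤ w) (hΓ1 : 1 ≤ Γ) (hΓ2 : Γ ≤ 2) :
    w ^ (Γ - 1) ≤ (2 - Γ) + (Γ - 1) * w := by
  have h := rpow_one_add_le_one_add_mul_self (show (-1:ℝ) ≤ w - 1 by linarith)
    (show (0:ℝ) ≤ Γ - 1 by linarith) (show Γ - 1 ≤ 1 by linarith)
  have hr' : (1 : ℝ) + (w - 1) = w := by ring
  rw [hr'] at h
  linarith

/-- The scalar core of the generalized Lax–Friedrichs splitting inequality. -/
lemma gLF_key_scalar (Γ σ ρ p ρs α β u s t : ℝ)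
    (hΓ1 : 1 < Γ) (hΓ2 : Γ ≤ 2) (hρ : 0 < ρ) (hρs : 0 < ρs)
    (hp : Real.exp σ * ρ ^ Γ ≤ p) (hs : 0 < s) (ht : 0 < t)
    (hα : 0 < α) (hβ : 0 < β) (h1 : t * s ≤ u)
    (h2 : β ^ 2 * s ^ 2 + α ^ 2 * t ^ 2 ≤ 2 * α * β * u) :
    0 ≤ (Γ - 1) * ρ * (α * u) + Γ * p * (α * u) - (Γ - 1) * β * p * s ^ 2
      - (Γ - 1) * ρ * (α * t * s) - Real.exp σ * Γ * ρ * ρs ^ (Γ - 1) * (α * t * s)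
      + (Γ - 1) * β * Real.exp σ * ρs ^ Γ * s ^ 2 := by
  set eσ := Real.exp σ with heσ
  have heσ0 : 0 < eσ := Real.exp_pos σ
  have hP : 0 < ρ ^ Γ := Real.rpow_pos_of_pos hρ Γ
  have hQ : 0 < ρs ^ Γ := Real.rpow_pos_of_pos hρs Γ
  have hR : 0 < ρs ^ (Γ - 1) := Real.rpow_pos_of_pos hρs (Γ - 1)
  have hp0 : 0 < p := lt_of_lt_of_le (by positivity) hp
  set w : ℝ := α * t / (β * s) with hwdef
  have hw : 0 < w := by positivity
  have hω : 0 < w ^ (Γ - 1) := Real.rpow_pos_of_pos hw (Γ - 1)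
  -- rpow identities
  have hwΓ : w ^ Γ = w ^ (Γ - 1) * w := by
    rw [show Γ = (Γ - 1) + 1 by ring]
    rw [Real.rpow_add hw, Real.rpow_one]
    ring_nf
  have hQ' : ρs ^ Γ = ρs ^ (Γ - 1) * ρs := by
    rw [show Γ = (Γ - 1) + 1 by ring]
    rw [Real.rpow_add hρs, Real.rpow_one]
    ring_nf
  -- Bernoulli facts
  have c3 : w ^ (Γ - 1) ≤ (2 - Γ) + (Γ - 1) * w := gLF_bern_down hw.le hΓ1.le hΓ2
  have c4 : Γ * (ρ * ρs ^ (Γ - 1)) * w ≤ w ^ (Γ - 1) * ρ ^ Γ * w + (Γ - 1) * ρs ^ Γ := by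
    have hb := gLF_bern_up (show (0:ℝ) ≤ ρ * w / ρs by positivity) hΓ1.le
    have hb2 := mul_le_mul_of_nonneg_right hb hQ.le
    have e4 : Γ * (ρ * w / ρs) * ρs ^ Γ = Γ * (ρ * ρs ^ (Γ - 1)) * w := by
      rw [hQ']; field_simp
    have e5 : (ρ * w / ρs) ^ Γ * ρs ^ Γ = w ^ (Γ - 1) * ρ ^ Γ * w := by
      rw [Real.div_rpow (by positivity) hρs.le, Real.mul_rpow hρ.le hw.le, hwΓ]
      field_simp
    nlinarith [hb2, e4, e5, hQ]
  -- geometric facts, rescaled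
  have f1 : 0 ≤ (2 - Γ) * β * (α * u - α * t * s) := by
    have : 0 ≤ α * u - α * t * s := by nlinarith [mul_le_mul_of_nonneg_left h1 hα.le]
    have h2Γ : 0 ≤ 2 - Γ := by linarith
    positivity
  have f2 : 0 ≤ (Γ - 1) * (2 * α * β * u - β ^ 2 * s ^ 2 - α ^ 2 * t ^ 2) :=
    mul_nonneg (by linarith) (by linarith)
  have e3 : w * (α * t * s * β) = α ^ 2 * t ^ 2 := by
    rw [hwdef]; field_simp
  have f3 : w ^ (Γ - 1) * (α * t * s * β) ≤ (2 - Γ) * (α * t * s * β) + (Γ - 1) * (α ^ 2 * t ^ 2) := by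
    have hpos : 0 ≤ α * t * s * β := by positivity
    have := mul_le_mul_of_nonneg_right c3 hpos
    nlinarith [this, e3]
  have c5' : (Γ - 1) * β ^ 2 * s ^ 2 + w ^ (Γ - 1) * (α * t * s) * β ≤ Γ * (α * u) * β := by
    linarith [f1, f2, f3]
  -- divide by β and multiply by p
  have d2 : (Γ - 1) * β * p * s ^ 2 + p * (w ^ (Γ - 1) * (α * t * s)) ≤ Γ * p * (α * u) := by
    have h' : (Γ - 1) * β * s ^ 2 + w ^ (Γ - 1) * (α * t * s) ≤ Γ * (α * u) := by
      have := c5'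
      have hb := hβ
      nlinarith [c5', hβ]
    nlinarith [mul_le_mul_of_nonneg_left h' hp0.le]
  -- Young consequence
  have d1 : eσ * Γ * ρ * ρs ^ (Γ - 1) * (α * t * s)
      ≤ eσ * (w ^ (Γ - 1)) * ρ ^ Γ * (α * t * s) + (Γ - 1) * β * eσ * ρs ^ Γ * s ^ 2 := by
    have hpos : (0:ℝ) ≤ eσ * β * s ^ 2 := by positivity
    have h4 := mul_le_mul_of_nonneg_left c4 hpos
    have e1 : eσ * β * s ^ 2 * (Γ * (ρ * ρs ^ (Γ - 1)) * w) = eσ * Γ * ρ * ρs ^ (Γ - 1) * (α * t * s) := by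
      rw [hwdef]; field_simp
    have e2 : eσ * β * s ^ 2 * (w ^ (Γ - 1) * ρ ^ Γ * w + (Γ - 1) * ρs ^ Γ)
        = eσ * (w ^ (Γ - 1)) * ρ ^ Γ * (α * t * s) + (Γ - 1) * β * eσ * ρs ^ Γ * s ^ 2 := by
      rw [hwdef]; field_simp
    linarith [h4, e1.ge, e1.le, e2.ge, e2.le]
  -- p bound
  have d3 : eσ * (w ^ (Γ - 1)) * ρ ^ Γ * (α * t * s) ≤ p * (w ^ (Γ - 1) * (α * t * s)) := by
    have hpos : (0:ℝ) ≤ w ^ (Γ - 1) * (α * t * s) := by positivity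
    nlinarith [mul_le_mul_of_nonneg_right hp hpos]
  have d4 : 0 ≤ (Γ - 1) * ρ * (α * u) - (Γ - 1) * ρ * (α * t * s) := by
    have h' : 0 ≤ α * u - α * t * s := by nlinarith [mul_le_mul_of_nonneg_left h1 hα.le]
    have := mul_nonneg (mul_nonneg (show (0:ℝ) ≤ Γ - 1 by linarith) hρ.le) h'
    linarith [this]
  linarith [d1, d2, d3, d4]

/-- Coordinate bound in Euclidean space. -/
lemma gLF_coord_le_norm {d : ℕ} (w : EuclideanSpace ℝ (Fin d)) (i : Fin d) : |w i| ≤ ‖w‖ := by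
  have h1 : ⟪EuclideanSpace.single i (1:ℝ), w⟫ = w i := by
    rw [EuclideanSpace.inner_single_left]; simp
  have h2 := abs_real_inner_le_norm (EuclideanSpace.single i (1:ℝ)) w
  rw [h1, EuclideanSpace.norm_single] at h2
  simpa using h2

/-- Geometric inequality at `Γ = 2`. -/
lemma gLF_geom2 {d : ℕ} (v vs : EuclideanSpace ℝ (Fin d)) (θ : ℝ) (hθ : θ ∈ Set.Icc (-1:ℝ) 1)
    (i : Fin d) :
    (1 + θ * vs i) ^ 2 * (1 - ‖v‖^2) + (1 + θ * v i) ^ 2 * (1 - ‖vs‖^2)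
      ≤ 2 * (1 + θ * v i) * (1 + θ * vs i) * (1 - ⟪v, vs⟫) := by
  set α := 1 + θ * v i with hα
  set β := 1 + θ * vs i with hβ
  have hcomp : |(α • vs - β • v) i| ≤ ‖α • vs - β • v‖ := gLF_coord_le_norm _ i
  have hco : (α • vs - β • v) i = vs i - v i := by
    simp [hα, hβ]; ring
  have hnorm : ‖α • vs - β • v‖ ^ 2
      = α^2 * ‖vs‖^2 - 2 * α * β * ⟪v, vs⟫ + β^2 * ‖v‖^2 := by
    rw [norm_sub_sq_real, norm_smul, norm_smul, real_inner_smul_left, real_inner_smul_right]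
    rw [real_inner_comm vs v]
    simp [mul_pow, Real.norm_eq_abs, sq_abs]
    ring
  have hsq : (vs i - v i) ^ 2 ≤ α^2 * ‖vs‖^2 - 2 * α * β * ⟪v, vs⟫ + β^2 * ‖v‖^2 := by
    rw [← hnorm, ← hco]
    calc ((α • vs - β • v) i)^2 = |(α • vs - β • v) i|^2 := (sq_abs _).symm
      _ ≤ ‖α • vs - β • v‖^2 := by
          apply pow_le_pow_left₀ (abs_nonneg _) hcomp
  have hαβ : (α - β)^2 ≤ (vs i - v i)^2 := by
    have h' : α - β = θ * (v i - vs i) := by rw [hα, hβ]; ring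
    rw [h']
    have h1 := hθ.1; have h2 := hθ.2
    nlinarith [mul_nonneg (mul_nonneg (show (0:ℝ) ≤ 1 - θ by linarith)
      (show (0:ℝ) ≤ 1 + θ by linarith)) (sq_nonneg (v i - vs i))]
  nlinarith [hsq, hαβ]

/-- Lorentz-type inequality `√(1-‖vs‖²)√(1-‖v‖²) ≤ 1 - ⟪v,vs⟫`. -/
lemma gLF_geom1 {d : ℕ} (v vs : EuclideanSpace ℝ (Fin d)) (hv : ‖v‖ < 1) (hvs : ‖vs‖ < 1) :
    Real.sqrt (1 - ‖vs‖^2) * Real.sqrt (1 - ‖v‖^2) ≤ 1 - ⟪v, vs⟫ := by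
  have h0v : (0:ℝ) ≤ ‖v‖ := norm_nonneg v
  have h0vs : (0:ℝ) ≤ ‖vs‖ := norm_nonneg vs
  have hCS : ⟪v, vs⟫ ≤ ‖v‖ * ‖vs‖ := real_inner_le_norm v vs
  have key : Real.sqrt (1 - ‖vs‖^2) * Real.sqrt (1 - ‖v‖^2) ≤ 1 - ‖v‖ * ‖vs‖ := by
    rw [← Real.sqrt_mul (by nlinarith) _]
    have h' : (1 - ‖vs‖^2) * (1 - ‖v‖^2) ≤ (1 - ‖v‖ * ‖vs‖)^2 := by
      nlinarith [sq_nonneg (‖v‖ - ‖vs‖)]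
    calc Real.sqrt ((1 - ‖vs‖^2) * (1 - ‖v‖^2)) ≤ Real.sqrt ((1 - ‖v‖ * ‖vs‖)^2) :=
          Real.sqrt_le_sqrt h'
      _ = 1 - ‖v‖ * ‖vs‖ := Real.sqrt_sq (by nlinarith)
  linarith

theorem gLF_key_inequality {d : ℕ} (hd : 1 ≤ d) (Γ σ ρ p : ℝ)
    (v : EuclideanSpace ℝ (Fin d)) (hΓ1 : 1 < Γ) (hΓ2 : Γ ≤ 2)
    (hρ : 0 < ρ) (hv : ‖v‖ < 1) (hp : Real.exp σ * ρ ^ Γ ≤ p)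
    (θ : ℝ) (hθ : θ ∈ Set.Icc (-1 : ℝ) 1) (i : Fin d)
    (vs : EuclideanSpace ℝ (Fin d)) (hvs : ‖vs‖ < 1) (ρs : ℝ) (hρs : 0 < ρs) :
    0 ≤ phi Γ σ (stateOf Γ ρ p v + θ • fluxOf Γ ρ p v i) vs ρs
        + θ * Real.exp σ * vs i * ρs ^ Γ := by
  have hv2 : ‖v‖ ^ 2 < 1 := by nlinarith [norm_nonneg v]
  have hvs2 : ‖vs‖ ^ 2 < 1 := by nlinarith [norm_nonneg vs]
  have hs : 0 < Real.sqrt (1 - ‖v‖^2) := Real.sqrt_pos.mpr (by linarith)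
  have ht : 0 < Real.sqrt (1 - ‖vs‖^2) := Real.sqrt_pos.mpr (by linarith)
  have hs2 : Real.sqrt (1 - ‖v‖^2) ^ 2 = 1 - ‖v‖^2 := Real.sq_sqrt (by linarith)
  have ht2 : Real.sqrt (1 - ‖vs‖^2) ^ 2 = 1 - ‖vs‖^2 := Real.sq_sqrt (by linarith)
  have hθ1 := hθ.1
  have hθ2 := hθ.2
  have hθabs : |θ| ≤ 1 := abs_le.mpr ⟨hθ1, hθ2⟩
  -- positivity of α and β
  have hα : 0 < 1 + θ * v i := by
    have h1 : |θ * v i| ≤ ‖v‖ := by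
      rw [abs_mul]
      calc |θ| * |v i| ≤ 1 * |v i| := by
            apply mul_le_mul_of_nonneg_right hθabs (abs_nonneg _)
        _ = |v i| := one_mul _
        _ ≤ ‖v‖ := gLF_coord_le_norm v i
    have h2 := neg_abs_le (θ * v i)
    linarith
  have hβ : 0 < 1 + θ * vs i := by
    have h1 : |θ * vs i| ≤ ‖vs‖ := by
      rw [abs_mul]
      calc |θ| * |vs i| ≤ 1 * |vs i| := by
            apply mul_le_mul_of_nonneg_right hθabs (abs_nonneg _)
        _ = |vs i| := one_mul _
        _ ≤ ‖vs‖ := gLF_coord_le_norm vs i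
    have h2 := neg_abs_le (θ * vs i)
    linarith
  -- geometric hypotheses
  have h1 : Real.sqrt (1 - ‖vs‖^2) * Real.sqrt (1 - ‖v‖^2) ≤ 1 - ⟪v, vs⟫ :=
    gLF_geom1 v vs hv hvs
  have h2 : (1 + θ * vs i) ^ 2 * Real.sqrt (1 - ‖v‖^2) ^ 2
      + (1 + θ * v i) ^ 2 * Real.sqrt (1 - ‖vs‖^2) ^ 2
      ≤ 2 * (1 + θ * v i) * (1 + θ * vs i) * (1 - ⟪v, vs⟫) := by
    rw [hs2, ht2]
    exact gLF_geom2 v vs θ hθ i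
  have key := gLF_key_scalar Γ σ ρ p ρs (1 + θ * v i) (1 + θ * vs i) (1 - ⟪v, vs⟫)
    (Real.sqrt (1 - ‖v‖^2)) (Real.sqrt (1 - ‖vs‖^2))
    hΓ1 hΓ2 hρ hρs hp hs ht hα hβ h1 h2
  -- unfold phi of the shifted state
  have hphi : phi Γ σ (stateOf Γ ρ p v + θ • fluxOf Γ ρ p v i) vs ρs
      = (ρ * (1 + Γ * p / ((Γ - 1) * ρ)) * (1 / Real.sqrt (1 - ‖v‖^2))^2 * (1 + θ * v i) - p
          - (ρ * (1 + Γ * p / ((Γ - 1) * ρ)) * (1 / Real.sqrt (1 - ‖v‖^2))^2 * (1 + θ * v i) * ⟪v, vs⟫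
              + θ * p * vs i)
          - ρ * (1 / Real.sqrt (1 - ‖v‖^2)) * (1 + θ * v i) * Real.sqrt (1 - ‖vs‖^2)
          + Real.exp σ * (ρs ^ Γ - Γ / (Γ - 1) * (ρ * (1 / Real.sqrt (1 - ‖v‖^2)) * (1 + θ * v i))
              * ρs ^ (Γ - 1) * Real.sqrt (1 - ‖vs‖^2))) := by
    simp only [phi, stateOf, fluxOf, Prod.fst_add, Prod.snd_add, Prod.smul_fst, Prod.smul_snd,
      smul_eq_mul, inner_add_left, real_inner_smul_left, EuclideanSpace.inner_single_left,
      PiLp.smul_apply, map_one, one_mul, RCLike.inner_apply, starRingEnd_apply]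
    ring
  rw [hphi]
  -- relate the unfolded expression to the scalar core
  have hΓ0 : (0:ℝ) < Γ - 1 := by linarith
  have hc : (0:ℝ) < (Γ - 1) * Real.sqrt (1 - ‖v‖^2) ^ 2 := by positivity
  have heq2 : (ρ * (1 + Γ * p / ((Γ - 1) * ρ)) * (1 / Real.sqrt (1 - ‖v‖^2))^2 * (1 + θ * v i) - p
          - (ρ * (1 + Γ * p / ((Γ - 1) * ρ)) * (1 / Real.sqrt (1 - ‖v‖^2))^2 * (1 + θ * v i) * ⟪v, vs⟫
              + θ * p * vs i)
          - ρ * (1 / Real.sqrt (1 - ‖v‖^2)) * (1 + θ * v i) * Real.sqrt (1 - ‖vs‖^2)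
          + Real.exp σ * (ρs ^ Γ - Γ / (Γ - 1) * (ρ * (1 / Real.sqrt (1 - ‖v‖^2)) * (1 + θ * v i))
              * ρs ^ (Γ - 1) * Real.sqrt (1 - ‖vs‖^2)))
        + θ * Real.exp σ * vs i * ρs ^ Γ
      = ((Γ - 1) * ρ * ((1 + θ * v i) * (1 - ⟪v, vs⟫))
          + Γ * p * ((1 + θ * v i) * (1 - ⟪v, vs⟫))
          - (Γ - 1) * (1 + θ * vs i) * p * Real.sqrt (1 - ‖v‖^2) ^ 2
          - (Γ - 1) * ρ * ((1 + θ * v i) * Real.sqrt (1 - ‖vs‖^2) * Real.sqrt (1 - ‖v‖^2))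
          - Real.exp σ * Γ * ρ * ρs ^ (Γ - 1)
              * ((1 + θ * v i) * Real.sqrt (1 - ‖vs‖^2) * Real.sqrt (1 - ‖v‖^2))
          + (Γ - 1) * (1 + θ * vs i) * Real.exp σ * ρs ^ Γ * Real.sqrt (1 - ‖v‖^2) ^ 2)
        / ((Γ - 1) * Real.sqrt (1 - ‖v‖^2) ^ 2) := by
    field_simp
    ring
  rw [heq2]
  exact div_nonneg key hc.le
end

section
/- Let v, v* be in the open unit ball of ℝ^d, θ ∈ [-1,1], i a fixed index. Then the quantity Π := 2·((1+θv_i)/(1-‖v‖²))·(1 - v·v*) - (1 + θv_{i,*}) satisfies Π ≥ (2(1+θv_i)/(1-‖v‖²) - 1)(1 - ‖v*‖) > 0. -/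
set_option maxHeartbeats 1000000


open scoped RealInnerProductSpace

theorem tildePi2_lower_bound_pos {d : ℕ} (v vs : EuclideanSpace ℝ (Fin d))
    (hv : ‖v‖ < 1) (hvs : ‖vs‖ < 1) (θ : ℝ) (hθ : θ ∈ Set.Icc (-1 : ℝ) 1) (i : Fin d) :
    (2 * (1 + θ * v i) / (1 - ‖v‖^2) - 1) * (1 - ‖vs‖)
        ≤ 2 * ((1 + θ * v i) / (1 - ‖v‖^2)) * (1 - ⟪v, vs⟫) - (1 + θ * vs i) ∧
    0 < (2 * (1 + θ * v i) / (1 - ‖v‖^2) - 1) * (1 - ‖vs‖) := by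
  obtain ⟨hθ1, hθ2⟩ := hθ
  have hvnn : (0:ℝ) ≤ ‖v‖ := norm_nonneg v
  have hvsnn : (0:ℝ) ≤ ‖vs‖ := norm_nonneg vs
  have hs2 : ‖v‖^2 < 1 := by nlinarith
  have h1s2 : (0:ℝ) < 1 - ‖v‖^2 := by linarith
  have hvi : |v i| ≤ ‖v‖ := by
    have h := abs_real_inner_le_norm (EuclideanSpace.single i (1:ℝ)) v
    simpa [EuclideanSpace.inner_single_left] using h
  have hvi' := abs_le.mp hvi
  have hθvi : |θ * v i| ≤ ‖v‖ := by
    rw [abs_mul]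
    calc |θ| * |v i| ≤ 1 * |v i| := by
          apply mul_le_mul_of_nonneg_right _ (abs_nonneg _)
          exact abs_le.mpr ⟨hθ1, hθ2⟩
      _ = |v i| := one_mul _
      _ ≤ ‖v‖ := hvi
  have hθvi' := abs_le.mp hθvi
  have hpos : 0 < 1 + θ * v i := by linarith [hθvi'.1]
  set a := (1 + θ * v i) / (1 - ‖v‖^2) with ha
  have haeq : 1 + θ * v i = a * (1 - ‖v‖^2) := (div_mul_cancel₀ _ h1s2.ne').symm
  have hapos : 0 < a := div_pos hpos h1s2
  have h2a1 : 0 < 2*a - 1 := by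
    have hnum : 0 < 2*(1 + θ * v i) - (1 - ‖v‖^2) := by nlinarith [hθvi'.1]
    have : 2*a - 1 = (2*(1 + θ * v i) - (1 - ‖v‖^2)) / (1 - ‖v‖^2) := by
      field_simp [ha]
      linear_combination (-2) * haeq
    rw [this]
    exact div_pos hnum h1s2
  set u : EuclideanSpace ℝ (Fin d) := (2*a) • v + θ • EuclideanSpace.single i 1 with hu
  have hg : 2 * (1 + θ * v i) / (1 - ‖v‖^2) = 2*a := by rw [ha]; ring
  clear_value a
  have hinner_u : ⟪u, vs⟫ = 2*a*⟪v,vs⟫ + θ * vs i := by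
    rw [hu, inner_add_left, real_inner_smul_left, real_inner_smul_left]
    simp [EuclideanSpace.inner_single_left]
  have hnorm_u_sq : ‖u‖^2 = (2*a)^2 * ‖v‖^2 + 2*(2*a*θ)*(v i) + θ^2 := by
    rw [hu, norm_add_sq_real]
    rw [norm_smul, norm_smul, real_inner_smul_left, real_inner_smul_right]
    simp [EuclideanSpace.inner_single_right, EuclideanSpace.norm_single, mul_pow, sq_abs]
    ring
  have hθsq : θ^2 ≤ 1 := by nlinarith
  have husq : ‖u‖^2 ≤ (2*a - 1)^2 := by nlinarith [haeq]
  have hule : ‖u‖ ≤ 2*a - 1 := by nlinarith [norm_nonneg u]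
  have hcs : 2*a*⟪v,vs⟫ + θ * vs i ≤ (2*a - 1) * ‖vs‖ := by
    rw [← hinner_u]
    calc ⟪u, vs⟫ ≤ ‖u‖ * ‖vs‖ := real_inner_le_norm u vs
      _ ≤ (2*a - 1) * ‖vs‖ := mul_le_mul_of_nonneg_right hule hvsnn
  clear hinner_u hnorm_u_sq husq hule hu
  clear_value u
  clear u
  rw [hg]
  constructor
  · nlinarith [hcs]
  · exact mul_pos h2a1 (by linarith)
end

section
/- Suppose Û and Ǔ are RHD states (with primitive variables satisfying ρ > 0, ‖v‖ < 1, p ≥ e^σ ρ^Γ for a fixed σ ∈ ℝ and Γ ∈ (1,2]), and α ≥ 1. Then the average G = (1/2)(Û - F_i(Û)/α + Ǔ + F_i(Ǔ)/α) also lies in the invariant region Ω_σ; that is, G has positive first component and satisfies φ_σ(G; v*, ρ*) ≥ 0 for all v* in the open unit ball and all ρ* > 0. -/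
open scoped RealInnerProductSpace

lemma coord_sq_le_norm_sq {d : ℕ} (x : EuclideanSpace ℝ (Fin d)) (i : Fin d) :
    (x i)^2 ≤ ‖x‖^2 := by
  have h : ‖x‖^2 = ∑ j, (x j)^2 := by
    rw [EuclideanSpace.norm_eq, Real.sq_sqrt (by positivity)]
    simp [sq_abs]
  rw [h]
  exact Finset.single_le_sum (f := fun j => (x j)^2) (fun j _ => sq_nonneg _)
    (Finset.mem_univ i)

lemma hw_gen {d : ℕ} (A B : ℝ) (v vs : EuclideanSpace ℝ (Fin d)) (i : Fin d) :
    (B * v i - A * vs i)^2 ≤ B^2*‖v‖^2 - 2*(A*B)*⟪v,vs⟫ + A^2*‖vs‖^2 := by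
  have h := coord_sq_le_norm_sq (B • v - A • vs) i
  have h1 : (B • v - A • vs) i = B * v i - A * vs i := rfl
  have h2 : ‖B • v - A • vs‖^2 = B^2*‖v‖^2 - 2*(A*B)*⟪v,vs⟫ + A^2*‖vs‖^2 := by
    rw [norm_sub_sq_real, norm_smul, norm_smul, real_inner_smul_left, real_inner_smul_right]
    simp [Real.norm_eq_abs, mul_pow, sq_abs]
    ring
  rw [h1, h2] at h
  exact h

lemma cs_fact {d : ℕ} (v vs : EuclideanSpace ℝ (Fin d)) (hv : ‖v‖ < 1) (hvs : ‖vs‖ < 1) :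
    Real.sqrt (1 - ‖v‖^2) * Real.sqrt (1 - ‖vs‖^2) ≤ 1 - ⟪v,vs⟫ := by
  have hcs : ⟪v,vs⟫ ≤ ‖v‖ * ‖vs‖ := real_inner_le_norm v vs
  have h1 : Real.sqrt (1 - ‖v‖^2) * Real.sqrt (1 - ‖vs‖^2)
      = Real.sqrt ((1 - ‖v‖^2) * (1 - ‖vs‖^2)) := by
    rw [Real.sqrt_mul (by nlinarith [norm_nonneg v])]
  rw [h1]
  have h2 : Real.sqrt ((1 - ‖v‖^2) * (1 - ‖vs‖^2)) ≤ 1 - ‖v‖ * ‖vs‖ := by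
    rw [show (1 - ‖v‖^2) * (1 - ‖vs‖^2) = (1 - ‖v‖*‖vs‖)^2 - (‖v‖ - ‖vs‖)^2 by ring]
    calc Real.sqrt ((1 - ‖v‖*‖vs‖)^2 - (‖v‖ - ‖vs‖)^2) ≤ Real.sqrt ((1 - ‖v‖*‖vs‖)^2) :=
          Real.sqrt_le_sqrt (by nlinarith [sq_nonneg (‖v‖ - ‖vs‖)])
      _ = 1 - ‖v‖*‖vs‖ := Real.sqrt_sq (by nlinarith [norm_nonneg v, norm_nonneg vs])
  linarith
noncomputable def Texpr (Γ σ ρ p ρs a b c x2 y2 : ℝ) : ℝ :=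
  (1-a) * ((ρ + Γ/(Γ-1)*p) * (1/Real.sqrt (1-x2))^2 * (1-c)
      - ρ * (1/Real.sqrt (1-x2)) * Real.sqrt (1-y2) * (1 + Γ/(Γ-1)*Real.exp σ * ρs^(Γ-1)))
    - p*(1-b) + Real.exp σ * (1-b) * ρs^Γ

set_option maxHeartbeats 1000000 in
lemma Lminus (Γ σ ρ p ρs a b c x2 y2 : ℝ)
    (hΓ1 : 1 < Γ) (hΓ2 : Γ ≤ 2) (hρ : 0 < ρ) (hp : Real.exp σ * ρ ^ Γ ≤ p)
    (hρs : 0 < ρs) (hx2 : 0 ≤ x2) (hx1 : x2 < 1) (hy2 : 0 ≤ y2) (hy1 : y2 < 1)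
    (ha : a^2 ≤ x2) (hb : b^2 ≤ y2)
    (hc : Real.sqrt (1-x2) * Real.sqrt (1-y2) ≤ 1 - c)
    (hw : (a-b)^2 ≤ (1-b)^2*x2 - 2*((1-a)*(1-b))*c + (1-a)^2*y2) :
    0 ≤ Texpr Γ σ ρ p ρs a b c x2 y2 := by
  have hs : 0 < Real.sqrt (1-x2) := Real.sqrt_pos.2 (by linarith)
  have hss : 0 < Real.sqrt (1-y2) := Real.sqrt_pos.2 (by linarith)
  set s := Real.sqrt (1-x2) with hsdef
  set ss := Real.sqrt (1-y2) with hssdef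
  have hs2 : s^2 = 1-x2 := Real.sq_sqrt (by linarith)
  have hss2 : ss^2 = 1-y2 := Real.sq_sqrt (by linarith)
  have ha1 : a < 1 := by nlinarith
  have hb1 : b < 1 := by nlinarith
  have hA : 0 < 1-a := by linarith
  have hB : 0 < 1-b := by linarith
  have hc0 : 0 < 1-c := lt_of_lt_of_le (by positivity) hc
  set θ := Γ - 1 with hθdef
  have hθ : 0 < θ := by rw [hθdef]; linarith
  have hθ1 : θ ≤ 1 := by rw [hθdef]; linarith
  have hes : (0:ℝ) < Real.exp σ := Real.exp_pos σ
  set es := Real.exp σ with hesdef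
  set u : ℝ := (1-a)*ss/s with hudef
  set M : ℝ := (1-a)*(1-c)/s^2 with hMdef
  have hu : 0 < u := by rw [hudef]; positivity
  have hM : 0 < M := by rw [hMdef]; positivity
  -- C1 : u ≤ M
  have hC1 : u ≤ M := by
    have key : M - u = ((1-a)*((1-c) - s*ss))/s^2 := by
      rw [hMdef, hudef]; field_simp
    have : 0 ≤ ((1-a)*((1-c) - s*ss))/s^2 :=
      div_nonneg (mul_nonneg hA.le (by linarith)) (sq_nonneg s)
    linarith
  -- C2 : u^2/B + B ≤ 2M
  have hpoly : (1-a)^2*ss^2 + (1-b)^2*s^2 ≤ 2*(1-a)*(1-b)*(1-c) := by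
    rw [hs2, hss2]; nlinarith
  have hC2 : u^2/(1-b) + (1-b) ≤ 2*M := by
    have key : 2*M - (u^2/(1-b) + (1-b))
        = (2*(1-a)*(1-b)*(1-c) - (1-b)^2*s^2 - (1-a)^2*ss^2)/(s^2*(1-b)) := by
      rw [hMdef, hudef]; field_simp; ring
    have : 0 ≤ (2*(1-a)*(1-b)*(1-c) - (1-b)^2*s^2 - (1-a)^2*ss^2)/(s^2*(1-b)) :=
      div_nonneg (by linarith) (by positivity)
    linarith
  have hΓ0 : (0:ℝ) < Γ := by linarith
  -- C3 : AM-GM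
  have hgm := Real.geom_mean_le_arith_mean2_weighted hθ.le
    (by linarith : (0:ℝ) ≤ 2-Γ) (by positivity : (0:ℝ) ≤ u^2/(1-b)) hu.le
    (by rw [hθdef]; ring)
  have hid : (u^2/(1-b))^θ * u^(2-Γ) = u^Γ * (1-b)^(1-Γ) := by
    have h1 : (u^2 : ℝ) = u ^ (2:ℝ) := by
      rw [← Real.rpow_natCast u 2]; norm_num
    rw [Real.div_rpow (by positivity) hB.le, h1, ← Real.rpow_mul hu.le,
        div_mul_eq_mul_div, ← Real.rpow_add hu,
        show 2*θ + (2-Γ) = Γ by rw [hθdef]; ring,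
        show (1:ℝ)-Γ = -θ by rw [hθdef]; ring, Real.rpow_neg hB.le, div_eq_mul_inv]
  rw [hid] at hgm
  -- C5
  have hC5 : u^Γ * (1-b)^(1-Γ) ≤ Γ*M - θ*(1-b) := by
    have h4a : u^2/(1-b) ≤ 2*M - (1-b) := by linarith
    have h4b := mul_le_mul_of_nonneg_left h4a hθ.le
    have h4c := mul_le_mul_of_nonneg_left hC1 (by linarith : (0:ℝ) ≤ 2-Γ)
    rw [hθdef] at h4b ⊢
    nlinarith [hgm]
  -- Young
  have hyoung : ρ*u*ρs^θ ≤ (1/Γ)*(ρ^Γ*(u^Γ*(1-b)^(1-Γ))) + (θ/Γ)*((1-b)*ρs^Γ) := by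
    have h := Real.geom_mean_le_arith_mean2_weighted
      (by positivity : (0:ℝ) ≤ 1/Γ) (by positivity : (0:ℝ) ≤ θ/Γ)
      (by positivity : (0:ℝ) ≤ ρ^Γ*(u^Γ*(1-b)^(1-Γ)))
      (by positivity : (0:ℝ) ≤ (1-b)*ρs^Γ)
      (by field_simp; rw [hθdef]; ring)
    refine le_trans (le_of_eq ?_) h
    rw [Real.mul_rpow (by positivity) (by positivity),
        Real.mul_rpow (by positivity) (by positivity),
        Real.mul_rpow (by positivity) (by positivity),
        ← Real.rpow_mul hρ.le, ← Real.rpow_mul hu.le,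
        ← Real.rpow_mul hB.le, ← Real.rpow_mul hρs.le,
        mul_one_div_cancel hΓ0.ne', Real.rpow_one, Real.rpow_one,
        show (1-Γ)*(1/Γ) = -(θ/Γ) by rw [hθdef]; field_simp; ring,
        show Γ*(θ/Γ) = θ by field_simp,
        Real.rpow_neg hB.le]
    have hBpow : (0:ℝ) < (1-b)^(θ/Γ) := Real.rpow_pos_of_pos hB _
    field_simp
  -- p-coefficient positivity
  have hkM : 0 < Γ/θ*M - (1-b) := by
    have hpos : (0:ℝ) < u^Γ*(1-b)^(1-Γ) := by positivity
    have h0 : 0 < Γ*M - θ*(1-b) := lt_of_lt_of_le hpos hC5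
    have heq : Γ/θ*M - (1-b) = (Γ*M - θ*(1-b))/θ := by field_simp
    rw [heq]; exact div_pos h0 hθ
  have hppart : es*ρ^Γ*(Γ/θ*M-(1-b)) ≤ p*(Γ/θ*M-(1-b)) :=
    mul_le_mul_of_nonneg_right hp hkM.le
  have hC6 : Γ/θ*(ρ*u*ρs^θ) ≤ ρ^Γ*(u^Γ*(1-b)^(1-Γ))/θ + (1-b)*ρs^Γ := by
    have h2 := mul_le_mul_of_nonneg_left hyoung (le_of_lt (div_pos hΓ0 hθ))
    refine h2.trans_eq ?_
    field_simp
  have hC5' : ρ^Γ*(u^Γ*(1-b)^(1-Γ))/θ ≤ ρ^Γ*(Γ/θ*M - (1-b)) := by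
    have hd : u^Γ*(1-b)^(1-Γ)/θ ≤ Γ/θ*M - (1-b) := by
      rw [div_le_iff₀ hθ]
      have heq : (Γ/θ*M - (1-b))*θ = Γ*M - θ*(1-b) := by field_simp
      rw [heq]; exact hC5
    calc ρ^Γ*(u^Γ*(1-b)^(1-Γ))/θ = ρ^Γ*(u^Γ*(1-b)^(1-Γ)/θ) := by ring
      _ ≤ ρ^Γ*(Γ/θ*M-(1-b)) :=
        mul_le_mul_of_nonneg_left hd (by positivity)
  -- assemble
  have hTid : Texpr Γ σ ρ p ρs a b c x2 y2
      = ρ*(M-u) + p*(Γ/θ*M - (1-b)) + es*((1-b)*ρs^Γ - Γ/θ*(ρ*u*ρs^θ)) := by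
    rw [Texpr, hMdef, hudef, hθdef, hesdef]
    have hθne : Γ - 1 ≠ 0 := by linarith
    rw [← hsdef, ← hssdef]
    have hsne : s ≠ 0 := hs.ne'
    field_simp
    ring
  rw [hTid]
  have h1 : 0 ≤ ρ*(M-u) := mul_nonneg hρ.le (by linarith)
  have h2 : es*(-(ρ^Γ*(Γ/θ*M-(1-b)))) ≤ es*((1-b)*ρs^Γ - Γ/θ*(ρ*u*ρs^θ)) := by
    apply mul_le_mul_of_nonneg_left _ hes.le
    linarith [hC6.trans (by linarith : ρ^Γ*(u^Γ*(1-b)^(1-Γ))/θ + (1-b)*ρs^Γ ≤ ρ^Γ*(Γ/θ*M-(1-b)) + (1-b)*ρs^Γ)]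
  linarith [h1, h2, hppart]


lemma Lminus_geo {d : ℕ} (Γ σ ρ p ρs : ℝ) (v vs : EuclideanSpace ℝ (Fin d)) (i : Fin d)
    (ε : ℝ) (hε : ε^2 = 1)
    (hΓ1 : 1 < Γ) (hΓ2 : Γ ≤ 2) (hρ : 0 < ρ) (hp : Real.exp σ * ρ ^ Γ ≤ p) (hρs : 0 < ρs)
    (hv : ‖v‖ < 1) (hvs : ‖vs‖ < 1) :
    0 ≤ Texpr Γ σ ρ p ρs (ε * v i) (ε * vs i) ⟪v,vs⟫ (‖v‖^2) (‖vs‖^2) := by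
  refine Lminus Γ σ ρ p ρs _ _ _ _ _ hΓ1 hΓ2 hρ hp hρs (by positivity)
    (pow_lt_one₀ (norm_nonneg v) hv (by norm_num)) (by positivity)
    (pow_lt_one₀ (norm_nonneg vs) hvs (by norm_num)) ?_ ?_ (cs_fact v vs hv hvs) ?_
  · calc (ε * v i)^2 = (v i)^2 := by linear_combination (v i)^2 * hε
      _ ≤ ‖v‖^2 := coord_sq_le_norm_sq v i
  · calc (ε * vs i)^2 = (vs i)^2 := by linear_combination (vs i)^2 * hε
      _ ≤ ‖vs‖^2 := coord_sq_le_norm_sq vs i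
  · have h := hw_gen (1 - ε * v i) (1 - ε * vs i) v vs i
    calc (ε * v i - ε * vs i)^2
        = ((1 - ε * vs i) * v i - (1 - ε * v i) * vs i)^2 := by
          linear_combination (v i - vs i)^2 * hε
      _ ≤ (1 - ε * vs i)^2*‖v‖^2 - 2*((1 - ε * v i)*(1 - ε * vs i))*⟪v,vs⟫
            + (1 - ε * v i)^2*‖vs‖^2 := h

set_option maxHeartbeats 2000000 in
theorem gLF_splitting_1D {d : ℕ} (hd : 1 ≤ d) (Γ σ α : ℝ)
    (hΓ1 : 1 < Γ) (hΓ2 : Γ ≤ 2) (hα : 1 ≤ α)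
    (ρ₁ p₁ : ℝ) (v₁ : EuclideanSpace ℝ (Fin d))
    (hρ₁ : 0 < ρ₁) (hv₁ : ‖v₁‖ < 1) (hp₁ : Real.exp σ * ρ₁ ^ Γ ≤ p₁)
    (ρ₂ p₂ : ℝ) (v₂ : EuclideanSpace ℝ (Fin d))
    (hρ₂ : 0 < ρ₂) (hv₂ : ‖v₂‖ < 1) (hp₂ : Real.exp σ * ρ₂ ^ Γ ≤ p₂)
    (i : Fin d) :
    let G := (1/2 : ℝ) • (stateOf Γ ρ₁ p₁ v₁ - α⁻¹ • fluxOf Γ ρ₁ p₁ v₁ i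
      + stateOf Γ ρ₂ p₂ v₂ + α⁻¹ • fluxOf Γ ρ₂ p₂ v₂ i)
    0 < G.1 ∧ ∀ vs : EuclideanSpace ℝ (Fin d), ‖vs‖ < 1 →
      ∀ ρs : ℝ, 0 < ρs → 0 ≤ phi Γ σ G vs ρs := by
  intro G
  have hα0 : (0:ℝ) < α := lt_of_lt_of_le one_pos hα
  have hαi : α⁻¹ ≤ 1 := inv_le_one_of_one_le₀ hα
  have hαi0 : (0:ℝ) < α⁻¹ := inv_pos.2 hα0
  have hs₁ : (0:ℝ) < Real.sqrt (1-‖v₁‖^2) :=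
    Real.sqrt_pos.2 (by nlinarith [norm_nonneg v₁])
  have hs₂ : (0:ℝ) < Real.sqrt (1-‖v₂‖^2) :=
    Real.sqrt_pos.2 (by nlinarith [norm_nonneg v₂])
  have hv₁i : |v₁ i| < 1 := by
    have := coord_sq_le_norm_sq v₁ i
    nlinarith [abs_nonneg (v₁ i), sq_abs (v₁ i), norm_nonneg v₁]
  have hv₂i : |v₂ i| < 1 := by
    have := coord_sq_le_norm_sq v₂ i
    nlinarith [abs_nonneg (v₂ i), sq_abs (v₂ i), norm_nonneg v₂]
  constructor
  · show 0 < (1/2 : ℝ) * ((stateOf Γ ρ₁ p₁ v₁).1 - α⁻¹ * (fluxOf Γ ρ₁ p₁ v₁ i).1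
      + (stateOf Γ ρ₂ p₂ v₂).1 + α⁻¹ * (fluxOf Γ ρ₂ p₂ v₂ i).1)
    simp only [stateOf, fluxOf]
    have k₁ : 0 < ρ₁*(1/Real.sqrt (1-‖v₁‖^2)) := by positivity
    have k₂ : 0 < ρ₂*(1/Real.sqrt (1-‖v₂‖^2)) := by positivity
    have e₁ : 0 < 1 - α⁻¹ * v₁ i := by
      have h1 : α⁻¹ * v₁ i ≤ α⁻¹ * |v₁ i| :=
        mul_le_mul_of_nonneg_left (le_abs_self _) hαi0.le
      nlinarith [abs_nonneg (v₁ i)]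
    have e₂ : 0 < 1 + α⁻¹ * v₂ i := by
      have h1 : α⁻¹ * (-(v₂ i)) ≤ α⁻¹ * |v₂ i| :=
        mul_le_mul_of_nonneg_left (neg_le_abs _) hαi0.le
      nlinarith [abs_nonneg (v₂ i)]
    nlinarith [mul_pos k₁ e₁, mul_pos k₂ e₂]
  · intro vs hvs ρs hρs
    have hss : (0:ℝ) < Real.sqrt (1-‖vs‖^2) :=
      Real.sqrt_pos.2 (by nlinarith [norm_nonneg vs])
    have hΓ0 : Γ - 1 ≠ 0 := sub_ne_zero.2 (ne_of_gt hΓ1)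
    have key : phi Γ σ G vs ρs
        = (1+α⁻¹)/4 * (Texpr Γ σ ρ₁ p₁ ρs ((1:ℝ) * v₁ i) ((1:ℝ) * vs i) ⟪v₁,vs⟫ (‖v₁‖^2) (‖vs‖^2)
                     + Texpr Γ σ ρ₂ p₂ ρs ((-1:ℝ) * v₂ i) ((-1:ℝ) * vs i) ⟪v₂,vs⟫ (‖v₂‖^2) (‖vs‖^2))
        + (1-α⁻¹)/4 * (Texpr Γ σ ρ₁ p₁ ρs ((-1:ℝ) * v₁ i) ((-1:ℝ) * vs i) ⟪v₁,vs⟫ (‖v₁‖^2) (‖vs‖^2)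
                     + Texpr Γ σ ρ₂ p₂ ρs ((1:ℝ) * v₂ i) ((1:ℝ) * vs i) ⟪v₂,vs⟫ (‖v₂‖^2) (‖vs‖^2)) := by
      show phi Γ σ ((1/2 : ℝ) • (stateOf Γ ρ₁ p₁ v₁ - α⁻¹ • fluxOf Γ ρ₁ p₁ v₁ i
        + stateOf Γ ρ₂ p₂ v₂ + α⁻¹ • fluxOf Γ ρ₂ p₂ v₂ i)) vs ρs = _
      simp only [phi, Texpr, stateOf, fluxOf, Prod.smul_fst, Prod.fst_add, Prod.fst_sub,
        Prod.smul_snd, Prod.snd_add, Prod.snd_sub, smul_eq_mul,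
        inner_add_left, inner_sub_left, real_inner_smul_left,
        EuclideanSpace.inner_single_left, starRingEnd_apply, star_trivial, star_one, one_mul]
      have n₁ : Real.sqrt (1-‖v₁‖^2) ≠ 0 := ne_of_gt hs₁
      have n₂ : Real.sqrt (1-‖v₂‖^2) ≠ 0 := ne_of_gt hs₂
      have nα : α ≠ 0 := ne_of_gt hα0
      have nρ₁ : ρ₁ ≠ 0 := ne_of_gt hρ₁
      have nρ₂ : ρ₂ ≠ 0 := ne_of_gt hρ₂
      simp only [PiLp.smul_apply, smul_eq_mul]
      field_simp
      ring
    rw [key]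
    have t₁ := Lminus_geo Γ σ ρ₁ p₁ ρs v₁ vs i 1 (by norm_num) hΓ1 hΓ2 hρ₁ hp₁ hρs hv₁ hvs
    have t₂ := Lminus_geo Γ σ ρ₂ p₂ ρs v₂ vs i (-1) (by norm_num) hΓ1 hΓ2 hρ₂ hp₂ hρs hv₂ hvs
    have t₃ := Lminus_geo Γ σ ρ₁ p₁ ρs v₁ vs i (-1) (by norm_num) hΓ1 hΓ2 hρ₁ hp₁ hρs hv₁ hvs
    have t₄ := Lminus_geo Γ σ ρ₂ p₂ ρs v₂ vs i 1 (by norm_num) hΓ1 hΓ2 hρ₂ hp₂ hρs hv₂ hvs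
    have c₁ : (0:ℝ) ≤ (1+α⁻¹)/4 := by linarith
    have c₂ : (0:ℝ) ≤ (1-α⁻¹)/4 := by linarith
    exact add_nonneg (mul_nonneg c₁ (add_nonneg t₁ t₂)) (mul_nonneg c₂ (add_nonneg t₃ t₄))
end

section
/- If σ₁ ≥ σ₂, then Ω_{σ₁} ⊆ Ω_{σ₂}, where Ω_σ = { U = (D,m,E) : D > 0 and φ_σ(U; v*, ρ*) ≥ 0 for all v* in the open unit ball of ℝ^d and all ρ* > 0 }. -/
open scoped RealInnerProductSpace

/-- The invariant region `Ω_σ` in its explicit, `U`-linear equivalent form. -/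
def Omega {d : ℕ} (Γ σ : ℝ) : Set (ℝ × EuclideanSpace ℝ (Fin d) × ℝ) :=
  {U | 0 < U.1 ∧ ∀ vs : EuclideanSpace ℝ (Fin d), ‖vs‖ < 1 →
    ∀ ρs : ℝ, 0 < ρs → 0 ≤ phi Γ σ U vs ρs}

theorem Omega_antitone {d : ℕ} (hd : 1 ≤ d) (Γ σ₁ σ₂ : ℝ)
    (hΓ1 : 1 < Γ) (hΓ2 : Γ ≤ 2) (hσ : σ₂ ≤ σ₁) :
    (Omega Γ σ₁ : Set (ℝ × EuclideanSpace ℝ (Fin d) × ℝ)) ⊆ Omega Γ σ₂ := by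
  rintro ⟨D, m, E⟩ ⟨hD, h⟩
  refine ⟨hD, fun vs hvs ρs hρs => ?_⟩
  have hΓ0 : 0 < Γ := by linarith
  set lam := Real.exp ((σ₂ - σ₁) / Γ) with hlam
  have hlampos : 0 < lam := Real.exp_pos _
  have hlamle : lam ≤ 1 := by
    rw [hlam, Real.exp_le_one_iff]
    exact div_nonpos_of_nonpos_of_nonneg (by linarith) hΓ0.le
  have hρ' : 0 < lam * ρs := mul_pos hlampos hρs
  have key := h vs hvs (lam * ρs) hρ'
  have hs : 0 ≤ Real.sqrt (1 - ‖vs‖^2) := Real.sqrt_nonneg _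
  -- first identity: exp σ₁ * (lam*ρs)^Γ = exp σ₂ * ρs^Γ
  have hlamΓ : lam ^ Γ = Real.exp (σ₂ - σ₁) := by
    rw [hlam, ← Real.exp_mul, div_mul_cancel₀ _ hΓ0.ne']
  have h1 : Real.exp σ₁ * (lam * ρs) ^ Γ = Real.exp σ₂ * ρs ^ Γ := by
    rw [Real.mul_rpow hlampos.le hρs.le, hlamΓ, ← mul_assoc, ← Real.exp_add]
    ring_nf
  -- second: exp σ₂ * ρs^(Γ-1) ≤ exp σ₁ * (lam*ρs)^(Γ-1)
  have h2 : Real.exp σ₂ * ρs ^ (Γ - 1) ≤ Real.exp σ₁ * (lam * ρs) ^ (Γ - 1) := by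
    rw [Real.mul_rpow hlampos.le hρs.le, hlam, ← Real.exp_mul, ← mul_assoc, ← Real.exp_add]
    have hρpow : 0 ≤ ρs ^ (Γ - 1) := Real.rpow_nonneg hρs.le _
    have : σ₂ ≤ σ₁ + (σ₂ - σ₁) / Γ * (Γ - 1) := by
      have heq : σ₁ + (σ₂ - σ₁) / Γ * (Γ - 1) - σ₂ = (σ₁ - σ₂) / Γ := by
        field_simp; ring
      have hn : 0 ≤ (σ₁ - σ₂) / Γ := div_nonneg (by linarith) hΓ0.le
      linarith
    exact mul_le_mul_of_nonneg_right (Real.exp_le_exp.2 this) hρpow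
  have h3 : 0 ≤ (Real.exp σ₁ * (lam * ρs) ^ (Γ - 1) - Real.exp σ₂ * ρs ^ (Γ - 1)) *
      (Γ / (Γ - 1) * D * Real.sqrt (1 - ‖vs‖^2)) := by
    apply mul_nonneg (by linarith)
    exact mul_nonneg (mul_nonneg (div_nonneg hΓ0.le (by linarith)) hD.le) hs
  simp only [phi] at key ⊢
  nlinarith [key, h3, h1]
end

section
/- Let σ₁, σ₂ ∈ ℝ, U₁ ∈ Ω_{σ₁}, U₂ ∈ Ω_{σ₂}, and λ ∈ [0,1]. Then λU₁ + (1-λ)U₂ ∈ Ω_{min(σ₁,σ₂)}, where Ω_σ is the set of states U = (D,m,E) with D > 0 and φ_σ(U; v*, ρ*) ≥ 0 for all v* in the open unit ball and all ρ* > 0. -/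
open scoped RealInnerProductSpace

lemma omega_mono {d : ℕ} (Γ σ σ' : ℝ) (hΓ1 : 1 < Γ) (hσ : σ' ≤ σ)
    (U : ℝ × EuclideanSpace ℝ (Fin d) × ℝ)
    (hU : U ∈ (Omega Γ σ : Set (ℝ × EuclideanSpace ℝ (Fin d) × ℝ))) :
    U ∈ (Omega Γ σ' : Set (ℝ × EuclideanSpace ℝ (Fin d) × ℝ)) := by
  obtain ⟨hD, h⟩ := hU
  refine ⟨hD, fun vs hvs ρs hρs => ?_⟩
  set ρ'' := ρs * Real.exp ((σ' - σ) / Γ) with hρ''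
  have hρ''pos : 0 < ρ'' := mul_pos hρs (Real.exp_pos _)
  have key := h vs hvs ρ'' hρ''pos
  have hΓ0 : (0:ℝ) < Γ := by linarith
  have h1 : Real.exp σ * ρ'' ^ Γ = Real.exp σ' * ρs ^ Γ := by
    rw [hρ'', Real.mul_rpow hρs.le (Real.exp_pos _).le, ← Real.exp_mul,
      div_mul_cancel₀ _ hΓ0.ne', ← mul_assoc, mul_comm (Real.exp σ),
      mul_assoc, ← Real.exp_add]
    ring_nf
  have h2 : Real.exp σ' * ρs ^ (Γ - 1) ≤ Real.exp σ * ρ'' ^ (Γ - 1) := by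
    rw [hρ'', Real.mul_rpow hρs.le (Real.exp_pos _).le, ← Real.exp_mul,
      ← mul_assoc, mul_comm (Real.exp σ), mul_assoc, ← Real.exp_add,
      mul_comm (Real.exp σ')]
    refine mul_le_mul_of_nonneg_left (Real.exp_le_exp.mpr ?_)
      (Real.rpow_nonneg hρs.le _)
    have h3 : σ' - σ ≤ (σ' - σ) / Γ * (Γ - 1) := by
      rw [div_mul_eq_mul_div, le_div_iff₀ hΓ0]; nlinarith
    linarith
  have hc : 0 ≤ Γ / (Γ - 1) * U.1 * Real.sqrt (1 - ‖vs‖^2) := by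
    have : 0 < Γ / (Γ - 1) := div_pos hΓ0 (by linarith)
    positivity
  have hmul := mul_le_mul_of_nonneg_left h2 hc
  calc (0:ℝ) ≤ phi Γ σ U vs ρ'' := key
    _ ≤ phi Γ σ' U vs ρs := by unfold phi; nlinarith [hmul, h1]

lemma phi_linear {d : ℕ} (Γ σ : ℝ) (U₁ U₂ : ℝ × EuclideanSpace ℝ (Fin d) × ℝ)
    (a b : ℝ) (hab : a + b = 1) (vs : EuclideanSpace ℝ (Fin d)) (ρs : ℝ) :
    phi Γ σ (a • U₁ + b • U₂) vs ρs = a * phi Γ σ U₁ vs ρs + b * phi Γ σ U₂ vs ρs := by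
  unfold phi
  simp only [Prod.fst_add, Prod.snd_add, Prod.smul_fst, Prod.smul_snd, smul_eq_mul,
    inner_add_left, real_inner_smul_left]
  have hb : b = 1 - a := by linarith
  subst hb
  ring

theorem Omega_convex_combination {d : ℕ} (hd : 1 ≤ d) (Γ σ₁ σ₂ : ℝ)
    (hΓ1 : 1 < Γ) (hΓ2 : Γ ≤ 2)
    (U₁ U₂ : ℝ × EuclideanSpace ℝ (Fin d) × ℝ)
    (hU₁ : U₁ ∈ (Omega Γ σ₁ : Set (ℝ × EuclideanSpace ℝ (Fin d) × ℝ)))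
    (hU₂ : U₂ ∈ (Omega Γ σ₂ : Set (ℝ × EuclideanSpace ℝ (Fin d) × ℝ)))
    (lam : ℝ) (hlam : lam ∈ Set.Icc (0 : ℝ) 1) :
    lam • U₁ + (1 - lam) • U₂ ∈
      (Omega Γ (min σ₁ σ₂) : Set (ℝ × EuclideanSpace ℝ (Fin d) × ℝ)) := by
  obtain ⟨hl0, hl1⟩ := hlam
  have h1 := omega_mono Γ σ₁ (min σ₁ σ₂) hΓ1 (min_le_left _ _) U₁ hU₁
  have h2 := omega_mono Γ σ₂ (min σ₁ σ₂) hΓ1 (min_le_right _ _) U₂ hU₂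
  obtain ⟨hD₁, hφ₁⟩ := h1
  obtain ⟨hD₂, hφ₂⟩ := h2
  constructor
  · simp only [Prod.fst_add, Prod.smul_fst, smul_eq_mul]
    rcases eq_or_lt_of_le hl0 with h | h
    · simp [← h, hD₂]
    · nlinarith
  · intro vs hvs ρs hρs
    rw [phi_linear Γ (min σ₁ σ₂) U₁ U₂ lam (1 - lam) (by ring) vs ρs]
    have := hφ₁ vs hvs ρs hρs
    have := hφ₂ vs hvs ρs hρs
    have : 0 ≤ lam * phi Γ (min σ₁ σ₂) U₁ vs ρs := by positivity
    have : 0 ≤ (1 - lam) * phi Γ (min σ₁ σ₂) U₂ vs ρs := by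
      apply mul_nonneg (by linarith) (hφ₂ vs hvs ρs hρs)
    linarith
end

section
/- Let N ≥ 1, weights s_j > 0 and unit vectors ξ^(j) ∈ ℝ^d with Σ_j s_j ξ^(j) = 0, and α ≥ 1. If U^(ij) ∈ Ω_σ for 1 ≤ i ≤ Q, 1 ≤ j ≤ N, and ω_i > 0 with Σ_i ω_i = 1, then the convex combination Ū = (Σ_j s_j)^{-1} Σ_{j,i} s_j ω_i (U^(ij) - (1/α) ξ^(j)·F(U^(ij))) belongs to Ω_σ, where ξ·F(U) = Σ_k ξ_k F_k(U). -/
open scoped RealInnerProductSpace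

lemma young1 (Γ z ρs : ℝ) (hΓ : 1 < Γ) (hz : 0 ≤ z) (hρs : 0 < ρs) :
    Γ * (z * ρs ^ (Γ - 1)) ≤ z ^ Γ + (Γ - 1) * ρs ^ Γ := by
  have hΓ0 : (0:ℝ) < Γ := by linarith
  have hΓ1 : (0:ℝ) ≤ Γ - 1 := by linarith
  have h := Real.geom_mean_le_arith_mean2_weighted
    (by positivity : (0:ℝ) ≤ 1/Γ) (by positivity : (0:ℝ) ≤ (Γ-1)/Γ)
    (by positivity : (0:ℝ) ≤ z ^ Γ) (le_of_lt (Real.rpow_pos_of_pos hρs Γ))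
    (by field_simp; ring)
  rw [← Real.rpow_mul hz, ← Real.rpow_mul hρs.le] at h
  rw [mul_one_div_cancel (ne_of_gt hΓ0), Real.rpow_one] at h
  rw [show Γ * ((Γ-1)/Γ) = Γ - 1 by field_simp] at h
  have hΓinv : 0 < 1/Γ := by positivity
  calc Γ * (z * ρs ^ (Γ-1)) ≤ Γ * (1/Γ * z ^ Γ + (Γ-1)/Γ * ρs ^ Γ) := by
        apply mul_le_mul_of_nonneg_left h hΓ0.le
    _ = z ^ Γ + (Γ - 1) * ρs ^ Γ := by field_simp

lemma young2 (Γ s : ℝ) (hΓ1 : 1 < Γ) (hΓ2 : Γ ≤ 2) (hs : 0 ≤ s) :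
    s ^ Γ ≤ Γ/2 * s^2 + (1 - Γ/2) := by
  have h := Real.geom_mean_le_arith_mean2_weighted
    (by positivity : (0:ℝ) ≤ Γ/2) (by linarith : (0:ℝ) ≤ 1 - Γ/2)
    (by positivity : (0:ℝ) ≤ s ^ (2:ℝ)) zero_le_one (by ring)
  rw [Real.one_rpow, mul_one, ← Real.rpow_mul hs] at h
  rw [show (2:ℝ) * (Γ/2) = Γ by ring] at h
  calc s ^ Γ ≤ Γ/2 * s ^ (2:ℝ) + (1 - Γ/2) * 1 := h
    _ = Γ/2 * s^2 + (1 - Γ/2) := by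
        rw [show (2:ℝ) = ((2:ℕ):ℝ) by norm_num, Real.rpow_natCast]; ring

lemma core (Γ σ ρ pr ρs e cs b A As : ℝ)
    (hΓ1 : 1 < Γ) (hΓ2 : Γ ≤ 2) (hρ : 0 < ρ) (hρs : 0 < ρs)
    (hp : Real.exp σ * ρ ^ Γ ≤ pr)
    (he : 0 < e) (hcs : 0 < cs)
    (hA : 0 < 1 + A) (hAs : 0 < 1 + As)
    (hK1 : e * cs ≤ 1 - b)
    (hK2 : (1+As)^2 * e^2 + (1+A)^2 * cs^2 ≤ 2*(1+A)*(1+As)*(1-b)) :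
    0 ≤ (1+A) * ((ρ + Γ/(Γ-1)*pr)/e^2) * (1-b) - pr*(1+As)
        - ρ/e*(1+A)*cs
        + Real.exp σ * ((1+As)*ρs^Γ - Γ/(Γ-1)*ρs^(Γ-1)*((1+A)*ρ*cs/e)) := by
  have hΓm : (0:ℝ) < Γ - 1 := by linarith
  obtain ⟨g, hgdef⟩ : ∃ g : ℝ, g = Γ/(Γ-1) := ⟨_, rfl⟩
  rw [← hgdef]
  have hgΓ : g * (Γ - 1) = Γ := by rw [hgdef]; exact div_mul_cancel₀ Γ (ne_of_gt hΓm)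
  have hg2 : 2 ≤ g := by rw [hgdef, le_div_iff₀ hΓm]; linarith
  have hg1 : (1:ℝ) < g := by linarith
  have heσ : 0 < Real.exp σ := Real.exp_pos σ
  have hρΓ : 0 < ρ ^ Γ := Real.rpow_pos_of_pos hρ Γ
  have hρsΓ : 0 < ρs ^ Γ := Real.rpow_pos_of_pos hρs Γ
  have hρsΓ1 : 0 < ρs ^ (Γ-1) := Real.rpow_pos_of_pos hρs (Γ-1)
  have hpr : 0 < pr := lt_of_lt_of_le (by positivity) hp
  have hb1 : 0 < 1 - b := lt_of_lt_of_le (by positivity) hK1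
  have he2 : (0:ℝ) < e^2 := by positivity
  obtain ⟨s, hsdef⟩ : ∃ s : ℝ, s = (1+A)*cs/((1+As)*e) := ⟨_, rfl⟩
  have hs0 : 0 < s := by rw [hsdef]; positivity
  obtain ⟨z, hzdef⟩ : ∃ z : ℝ, z = s * ρ := ⟨_, rfl⟩
  have hz0 : 0 < z := by rw [hzdef]; positivity
  have hgg : (g-1)*Γ = g := by linear_combination hgΓ
  have hgg2 : (g-1)*(Γ-1) = 1 := by linear_combination hgΓ
  -- s squared relation from K2
  have hs2' : s^2 * ((1+As)^2 * e^2) = (1+A)^2*cs^2 := by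
    rw [hsdef, div_pow]
    field_simp
  have hs2 : (1+As)*(e^2*(1 + s^2)) ≤ 2*(1+A)*(1-b) := by
    have h' : (1+As) * ((1+As)*(e^2*(1+s^2))) ≤ (1+As) * (2*(1+A)*(1-b)) := by
      nlinarith [hK2, hs2']
    exact le_of_mul_le_mul_left h' hAs
  -- combined Young 1
  have hy1 := young1 Γ z ρs hΓ1 hz0.le hρs
  have hy1' : g * (z * ρs^(Γ-1)) ≤ (g-1)*z^Γ + ρs^Γ := by
    calc g * (z*ρs^(Γ-1)) = (g-1) * (Γ * (z * ρs^(Γ-1))) := by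
          linear_combination (-(z * ρs ^ (Γ-1))) * hgg
      _ ≤ (g-1)*(z^Γ + (Γ-1)*ρs^Γ) := by
          apply mul_le_mul_of_nonneg_left hy1 (by linarith)
      _ = (g-1)*z^Γ + ρs^Γ := by linear_combination ρs^Γ * hgg2
  have hzΓ : z ^ Γ = s^Γ * ρ^Γ := by rw [hzdef]; exact Real.mul_rpow hs0.le hρ.le
  have hsΓ : 0 < s ^ Γ := Real.rpow_pos_of_pos hs0 Γ
  have hy2 := young2 Γ s hΓ1 hΓ2 hs0.le
  -- thermal part
  have hzz : (1+A)*ρ*cs/e = (1+As) * z := by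
    rw [hzdef, hsdef]; field_simp
  have h3 : g*ρs^(Γ-1)*((1+A)*ρ*cs/e) ≤ (1+As)*((g-1)*(s^Γ*ρ^Γ) + ρs^Γ) := by
    rw [hzz]
    calc g*ρs^(Γ-1)*((1+As)*z) = (1+As) * (g * (z * ρs^(Γ-1))) := by ring
      _ ≤ (1+As)*((g-1)*z^Γ + ρs^Γ) := mul_le_mul_of_nonneg_left hy1' hAs.le
      _ = (1+As)*((g-1)*(s^Γ*ρ^Γ) + ρs^Γ) := by rw [hzΓ]
  have h4 : (1+As)*(g*(1+s^2)/2) ≤ (1+A)*g*(1-b)/e^2 := by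
    rw [le_div_iff₀ he2]
    linarith [mul_le_mul_of_nonneg_left hs2 (by linarith : (0:ℝ) ≤ g/2)]
  have t1 : ρ^Γ * ((1+As)*(g*(1+s^2)/2)) ≤ ρ^Γ * ((1+A)*g*(1-b)/e^2) :=
    mul_le_mul_of_nonneg_left h4 hρΓ.le
  have t2 : ((1+As)*(g-1)*ρ^Γ) * (s^Γ) ≤ ((1+As)*(g-1)*ρ^Γ) * (Γ/2*s^2 + (1-Γ/2)) :=
    mul_le_mul_of_nonneg_left hy2 (mul_nonneg (mul_nonneg hAs.le (by linarith)) hρΓ.le)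
  have h5' : ρ^Γ*((1+As)*(g*(1+s^2)/2))
      = ρ^Γ*(1+As) + ((1+As)*(g-1)*ρ^Γ)*(Γ/2*s^2+(1-Γ/2)) := by
    linear_combination (ρ^Γ*(1+As)*(1/2 - s^2/2)) * hgg
  have hT : 0 ≤ ρ^Γ * ((1+A)*g*(1-b)/e^2 - (1+As))
      + ((1+As)*ρs^Γ - g*ρs^(Γ-1)*((1+A)*ρ*cs/e)) := by
    linarith [t1, t2, h3, h5']
  -- pressure coefficient nonneg
  have hP : 0 ≤ (1+A)*g*(1-b)/e^2 - (1+As) := by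
    rw [sub_nonneg, le_div_iff₀ he2]
    have hint1 : 0 ≤ (g-2)*((1+A)*(1-b)) :=
      mul_nonneg (by linarith) (mul_nonneg hA.le hb1.le)
    have hint2 : 0 ≤ (1+As)*(e^2*s^2) := by positivity
    linarith [hs2, hint1, hint2]
  -- kinetic part nonneg
  have hkin : cs/e ≤ (1-b)/e^2 := by
    rw [div_le_div_iff₀ he he2]
    have := mul_le_mul_of_nonneg_right hK1 he.le
    linarith [this]
  have hpP : Real.exp σ * ρ^Γ * ((1+A)*g*(1-b)/e^2 - (1+As))
      ≤ pr * ((1+A)*g*(1-b)/e^2 - (1+As)) := mul_le_mul_of_nonneg_right hp hP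
  have hdec : (1+A) * ((ρ + g*pr)/e^2) * (1-b) - pr*(1+As) - ρ/e*(1+A)*cs
      + Real.exp σ * ((1+As)*ρs^Γ - g*ρs^(Γ-1)*((1+A)*ρ*cs/e))
      = ρ*(1+A)*((1-b)/e^2 - cs/e) + pr*((1+A)*g*(1-b)/e^2 - (1+As))
        + Real.exp σ * ((1+As)*ρs^Γ - g*ρs^(Γ-1)*((1+A)*ρ*cs/e)) := by
    field_simp
    ring
  rw [hdec]
  have hk2 : 0 ≤ ρ*(1+A)*((1-b)/e^2 - cs/e) := by
    apply mul_nonneg (by positivity); linarith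
  have hTe : 0 ≤ Real.exp σ * (ρ^Γ * ((1+A)*g*(1-b)/e^2 - (1+As))
      + ((1+As)*ρs^Γ - g*ρs^(Γ-1)*((1+A)*ρ*cs/e))) := mul_nonneg heσ.le hT
  linarith [hk2, hpP, hTe]

lemma inner_sum_eq {d : ℕ} (w v : EuclideanSpace ℝ (Fin d)) :
    ⟪w, v⟫ = ∑ i, w i * v i := by
  simp [PiLp.inner_apply, RCLike.inner_apply, conj_trivial]
  exact Finset.sum_congr rfl (fun _ _ => mul_comm _ _)

lemma sum_single_eq {d : ℕ} (w : EuclideanSpace ℝ (Fin d)) :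
    ∑ k, w k • EuclideanSpace.single k (1:ℝ) = w := by
  ext i
  rw [WithLp.ofLp_sum, Finset.sum_apply i Finset.univ _]
  simp [EuclideanSpace.single_apply]

/-- components of `stateOf + ∑ w k • fluxOf k` -/
lemma UF_eq {d : ℕ} (Γ ρ pr : ℝ) (v w : EuclideanSpace ℝ (Fin d)) :
    stateOf Γ ρ pr v + ∑ k, w k • fluxOf Γ ρ pr v k
      = ((ρ * (1 / Real.sqrt (1 - ‖v‖^2))) * (1 + ⟪w,v⟫),
         ((ρ * (1 + Γ * pr / ((Γ - 1) * ρ)) * (1 / Real.sqrt (1 - ‖v‖^2))^2) * (1 + ⟪w,v⟫)) • v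
           + pr • w,
         (ρ * (1 + Γ * pr / ((Γ - 1) * ρ)) * (1 / Real.sqrt (1 - ‖v‖^2))^2) * (1 + ⟪w,v⟫) - pr) := by
  have hF1 : (∑ k, w k • fluxOf Γ ρ pr v k).1
      = (stateOf Γ ρ pr v).1 * ⟪w,v⟫ := by
    rw [Prod.fst_sum]
    simp only [Prod.smul_fst, fluxOf, smul_eq_mul]
    rw [inner_sum_eq w v, Finset.mul_sum]
    exact Finset.sum_congr rfl (fun k _ => by ring)
  have hF2 : (∑ k, w k • fluxOf Γ ρ pr v k).2.1
      = ⟪w,v⟫ • (stateOf Γ ρ pr v).2.1 + pr • w := by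
    rw [Prod.snd_sum, Prod.fst_sum]
    simp only [Prod.smul_snd, Prod.smul_fst, fluxOf]
    calc ∑ k, w k • (v k • (stateOf Γ ρ pr v).2.1 + pr • EuclideanSpace.single k (1:ℝ))
        = ∑ k, ((w k * v k) • (stateOf Γ ρ pr v).2.1
            + pr • (w k • EuclideanSpace.single k (1:ℝ))) := by
          refine Finset.sum_congr rfl (fun k _ => ?_)
          rw [smul_add, smul_smul, smul_comm (w k) pr]
      _ = (∑ k, w k * v k) • (stateOf Γ ρ pr v).2.1
            + pr • ∑ k, w k • EuclideanSpace.single k (1:ℝ) := by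
          rw [Finset.sum_add_distrib, ← Finset.sum_smul, Finset.smul_sum]
      _ = ⟪w,v⟫ • (stateOf Γ ρ pr v).2.1 + pr • w := by
          rw [sum_single_eq, inner_sum_eq w v]
  have hF3 : (∑ k, w k • fluxOf Γ ρ pr v k).2.2
      = (ρ * (1 + Γ * pr / ((Γ - 1) * ρ)) * (1 / Real.sqrt (1 - ‖v‖^2))^2) * ⟪w,v⟫ := by
    rw [Prod.snd_sum, Prod.snd_sum]
    simp only [Prod.smul_snd, fluxOf, smul_eq_mul, stateOf]
    rw [inner_sum_eq w v, Finset.mul_sum]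
    refine Finset.sum_congr rfl (fun k _ => ?_)
    rw [PiLp.smul_apply, smul_eq_mul]
    ring
  refine Prod.ext ?_ (Prod.ext ?_ ?_)
  · rw [Prod.fst_add, hF1]
    simp only [stateOf]
    ring
  · rw [Prod.snd_add, Prod.fst_add, hF2]
    simp only [stateOf]
    module
  · rw [Prod.snd_add, Prod.snd_add, hF3]
    simp only [stateOf]
    ring
open scoped RealInnerProductSpace

set_option maxHeartbeats 1000000 in
lemma key_ineq {d : ℕ} (Γ σ : ℝ) (hΓ1 : 1 < Γ) (hΓ2 : Γ ≤ 2)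
    (ρ pr : ℝ) (hρ : 0 < ρ) (hp : Real.exp σ * ρ ^ Γ ≤ pr)
    (v w vs : EuclideanSpace ℝ (Fin d)) (hv : ‖v‖ < 1) (hw : ‖w‖ ≤ 1) (hvs : ‖vs‖ < 1)
    (ρs : ℝ) (hρs : 0 < ρs) :
    0 ≤ phi Γ σ (stateOf Γ ρ pr v + ∑ k, w k • fluxOf Γ ρ pr v k) vs ρs
        + Real.exp σ * ⟪w, vs⟫ * ρs ^ Γ := by
  have hΓm : (0:ℝ) < Γ - 1 := by linarith
  have hv0 := norm_nonneg v
  have hvs0 := norm_nonneg vs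
  have hv2 : (0:ℝ) < 1 - ‖v‖^2 := by nlinarith
  have hvs2 : (0:ℝ) < 1 - ‖vs‖^2 := by nlinarith
  obtain ⟨e, hedef⟩ : ∃ e : ℝ, e = Real.sqrt (1 - ‖v‖^2) := ⟨_, rfl⟩
  obtain ⟨cs, hcsdef⟩ : ∃ c : ℝ, c = Real.sqrt (1 - ‖vs‖^2) := ⟨_, rfl⟩
  have he : 0 < e := hedef ▸ Real.sqrt_pos.mpr hv2
  have hcs : 0 < cs := hcsdef ▸ Real.sqrt_pos.mpr hvs2
  have hee : e^2 = 1 - ‖v‖^2 := by rw [hedef]; exact Real.sq_sqrt hv2.le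
  have hcss : cs^2 = 1 - ‖vs‖^2 := by rw [hcsdef]; exact Real.sq_sqrt hvs2.le
  -- inner product bounds
  have hA : 0 < 1 + ⟪w,v⟫ := by
    have h1 := abs_real_inner_le_norm w v
    have h2 : ‖w‖*‖v‖ ≤ ‖v‖ := mul_le_of_le_one_left hv0 hw
    have := neg_abs_le (⟪w,v⟫ : ℝ)
    linarith
  have hAs : 0 < 1 + ⟪w,vs⟫ := by
    have h1 := abs_real_inner_le_norm w vs
    have h2 : ‖w‖*‖vs‖ ≤ ‖vs‖ := mul_le_of_le_one_left hvs0 hw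
    have := neg_abs_le (⟪w,vs⟫ : ℝ)
    linarith
  -- kinetic inequality K1
  have hK1 : e * cs ≤ 1 - ⟪v,vs⟫ := by
    have hb := real_inner_le_norm v vs
    have hxy : ‖v‖*‖vs‖ < 1 := by nlinarith
    have h1 : (1-‖v‖^2)*(1-‖vs‖^2) ≤ (1 - ‖v‖*‖vs‖)^2 := by nlinarith [sq_nonneg (‖v‖-‖vs‖)]
    have h2 : e*cs = Real.sqrt ((1-‖v‖^2)*(1-‖vs‖^2)) := by
      rw [hedef, hcsdef, ← Real.sqrt_mul hv2.le]
    have h3 : Real.sqrt ((1-‖v‖^2)*(1-‖vs‖^2)) ≤ 1 - ‖v‖*‖vs‖ := by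
      rw [show (1-‖v‖*‖vs‖) = Real.sqrt ((1-‖v‖*‖vs‖)^2) from
        (Real.sqrt_sq (by linarith)).symm]
      exact Real.sqrt_le_sqrt h1
    linarith
  -- geometric inequality K2
  have hK2 : (1+⟪w,vs⟫)^2 * e^2 + (1+⟪w,v⟫)^2 * cs^2
      ≤ 2*(1+⟪w,v⟫)*(1+⟪w,vs⟫)*(1-⟪v,vs⟫) := by
    obtain ⟨u, hudef⟩ : ∃ u : EuclideanSpace ℝ (Fin d),
      u = (1+⟪w,vs⟫) • v - (1+⟪w,v⟫) • vs := ⟨_, rfl⟩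
    have h1 : ‖u‖^2 = (1+⟪w,vs⟫)^2*‖v‖^2 - 2*(1+⟪w,vs⟫)*(1+⟪w,v⟫)*⟪v,vs⟫
        + (1+⟪w,v⟫)^2*‖vs‖^2 := by
      rw [hudef, norm_sub_sq_real, norm_smul, norm_smul, real_inner_smul_left,
        real_inner_smul_right, mul_pow, mul_pow, Real.norm_eq_abs, Real.norm_eq_abs,
        sq_abs, sq_abs]
      ring
    have h2 : ⟪u,w⟫ = ⟪w,v⟫ - ⟪w,vs⟫ := by
      rw [hudef, inner_sub_left, real_inner_smul_left, real_inner_smul_left,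
        real_inner_comm v w, real_inner_comm vs w]
      ring
    have h3 : ⟪u,w⟫*⟪u,w⟫ ≤ (‖u‖*‖u‖)*(‖w‖*‖w‖) := by
      have := real_inner_mul_inner_self_le u w
      rwa [real_inner_self_eq_norm_mul_norm, real_inner_self_eq_norm_mul_norm] at this
    have h4 : (⟪w,v⟫ - ⟪w,vs⟫)^2 ≤ ‖u‖^2 := by
      have hwn : ‖w‖*‖w‖ ≤ 1 := by nlinarith [norm_nonneg w]
      nlinarith [h3, h2, mul_self_nonneg ‖u‖]
    rw [hee, hcss]
    nlinarith [h1, h4]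
  -- the scalar core inequality
  have hcore := core Γ σ ρ pr ρs e cs ⟪v,vs⟫ ⟪w,v⟫ ⟪w,vs⟫
    hΓ1 hΓ2 hρ hρs hp he hcs hA hAs hK1 hK2
  -- rewrite the goal into the scalar form
  rw [UF_eq Γ ρ pr v w]
  have hgoal : phi Γ σ ((ρ * (1 / Real.sqrt (1 - ‖v‖^2))) * (1 + ⟪w,v⟫),
         ((ρ * (1 + Γ * pr / ((Γ - 1) * ρ)) * (1 / Real.sqrt (1 - ‖v‖^2))^2) * (1 + ⟪w,v⟫)) • v
           + pr • w,
         (ρ * (1 + Γ * pr / ((Γ - 1) * ρ)) * (1 / Real.sqrt (1 - ‖v‖^2))^2) * (1 + ⟪w,v⟫) - pr)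
        vs ρs + Real.exp σ * ⟪w, vs⟫ * ρs ^ Γ
      = (1+⟪w,v⟫) * ((ρ + Γ/(Γ-1)*pr)/e^2) * (1-⟪v,vs⟫) - pr*(1+⟪w,vs⟫)
        - ρ/e*(1+⟪w,v⟫)*cs
        + Real.exp σ * ((1+⟪w,vs⟫)*ρs^Γ - Γ/(Γ-1)*ρs^(Γ-1)*((1+⟪w,v⟫)*ρ*cs/e)) := by
    simp only [phi]
    rw [inner_add_left, real_inner_smul_left, real_inner_smul_left, ← hedef, ← hcsdef]
    field_simp
    ring
  rw [hgoal]
  exact hcore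

set_option maxHeartbeats 1000000 in
theorem gLF_splitting_multiD {d : ℕ} (hd : 1 ≤ d) (Γ σ α : ℝ)
    (hΓ1 : 1 < Γ) (hΓ2 : Γ ≤ 2) (hα : 1 ≤ α)
    (N Q : ℕ) (hN : 1 ≤ N) (hQ : 1 ≤ Q)
    (s : Fin N → ℝ) (hs : ∀ j, 0 < s j)
    (ξ : Fin N → EuclideanSpace ℝ (Fin d)) (hξ : ∀ j, ‖ξ j‖ = 1)
    (hsum : ∑ j, s j • ξ j = 0)
    (ω : Fin Q → ℝ) (hω : ∀ i, 0 < ω i) (hω1 : ∑ i, ω i = 1)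
    (ρ p : Fin Q → Fin N → ℝ) (v : Fin Q → Fin N → EuclideanSpace ℝ (Fin d))
    (hρ : ∀ i j, 0 < ρ i j) (hv : ∀ i j, ‖v i j‖ < 1)
    (hp : ∀ i j, Real.exp σ * ρ i j ^ Γ ≤ p i j) :
    (∑ j, s j)⁻¹ • (∑ j, ∑ i, (s j * ω i) •
        (stateOf Γ (ρ i j) (p i j) (v i j)
          - α⁻¹ • ∑ k, ξ j k • fluxOf Γ (ρ i j) (p i j) (v i j) k))
      ∈ (Omega Γ σ : Set (ℝ × EuclideanSpace ℝ (Fin d) × ℝ)) := by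
  have hα0 : (0:ℝ) < α := lt_of_lt_of_le one_pos hα
  obtain ⟨w, hwdef⟩ : ∃ w : Fin N → EuclideanSpace ℝ (Fin d),
    w = fun j => (-α⁻¹) • ξ j := ⟨_, rfl⟩
  have hw : ∀ j, ‖w j‖ ≤ 1 := by
    intro j
    rw [hwdef]
    simp only [norm_smul, hξ j, mul_one, Real.norm_eq_abs, abs_neg,
      abs_of_pos (inv_pos.mpr hα0)]
    exact inv_le_one_of_one_le₀ hα
  have hterm : ∀ i j, stateOf Γ (ρ i j) (p i j) (v i j)
      - α⁻¹ • ∑ k, ξ j k • fluxOf Γ (ρ i j) (p i j) (v i j) k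
      = stateOf Γ (ρ i j) (p i j) (v i j)
        + ∑ k, (w j) k • fluxOf Γ (ρ i j) (p i j) (v i j) k := by
    intro i j
    rw [sub_eq_add_neg, ← neg_smul, Finset.smul_sum]
    congr 1
    refine Finset.sum_congr rfl (fun k _ => ?_)
    rw [smul_smul, hwdef]
    simp
  simp only [hterm]
  haveI : Nonempty (Fin N) := ⟨⟨0, hN⟩⟩
  haveI : Nonempty (Fin Q) := ⟨⟨0, hQ⟩⟩
  have hS : 0 < ∑ j, s j := Finset.sum_pos (fun j _ => hs j) Finset.univ_nonempty
  have hApos : ∀ i j, 0 < 1 + ⟪w j, v i j⟫ := by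
    intro i j
    have h1 := abs_real_inner_le_norm (w j) (v i j)
    have h2 : ‖w j‖*‖v i j‖ ≤ ‖v i j‖ := mul_le_of_le_one_left (norm_nonneg _) (hw j)
    have h3 := neg_abs_le (⟪w j, v i j⟫ : ℝ)
    have := hv i j
    linarith
  constructor
  · -- positivity of the first component
    simp only [Prod.smul_fst, Prod.fst_sum, smul_eq_mul]
    apply mul_pos (inv_pos.mpr hS)
    refine Finset.sum_pos (fun j _ => Finset.sum_pos (fun i _ => ?_) Finset.univ_nonempty)
      Finset.univ_nonempty
    rw [UF_eq]
    apply mul_pos (mul_pos (hs j) (hω i))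
    have hv2 : (0:ℝ) < 1 - ‖v i j‖^2 := by
      have := hv i j; have := norm_nonneg (v i j); nlinarith
    have h5 : 0 < Real.sqrt (1 - ‖v i j‖^2) := Real.sqrt_pos.mpr hv2
    exact mul_pos (mul_pos (hρ i j) (one_div_pos.mpr h5)) (hApos i j)
  · intro vs hvs ρs hρs
    obtain ⟨C, hCdef⟩ : ∃ C : ℝ, C = Real.sqrt (1-‖vs‖^2)
        + Real.exp σ * (Γ/(Γ-1)) * ρs^(Γ-1) * Real.sqrt (1-‖vs‖^2) := ⟨_, rfl⟩
    obtain ⟨L, hLdef⟩ : ∃ L : (ℝ × EuclideanSpace ℝ (Fin d) × ℝ) →ₗ[ℝ] ℝ,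
        ∀ U : ℝ × EuclideanSpace ℝ (Fin d) × ℝ, L U = U.2.2 - ⟪U.2.1, vs⟫ - U.1 * C := by
      refine ⟨⟨⟨fun U => U.2.2 - ⟪U.2.1, vs⟫ - U.1 * C, ?_⟩, ?_⟩, fun U => rfl⟩
      · intro x y
        simp only [Prod.fst_add, Prod.snd_add, inner_add_left]
        ring
      · intro c x
        simp only [Prod.smul_fst, Prod.smul_snd, real_inner_smul_left, smul_eq_mul,
          RingHom.id_apply]
        ring
    have hphiL : ∀ U : ℝ × EuclideanSpace ℝ (Fin d) × ℝ,
        phi Γ σ U vs ρs = L U + Real.exp σ * ρs^Γ := by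
      intro U
      rw [hLdef U, hCdef]
      simp only [phi]
      ring
    rw [hphiL, map_smul, map_sum, smul_eq_mul]
    simp only [map_sum, map_smul, smul_eq_mul]
    -- bound each L value using the key inequality
    have hLbd : ∀ i j, -(Real.exp σ * ⟪w j, vs⟫ * ρs^Γ) - Real.exp σ * ρs^Γ
        ≤ L (stateOf Γ (ρ i j) (p i j) (v i j)
          + ∑ k, (w j) k • fluxOf Γ (ρ i j) (p i j) (v i j) k) := by
      intro i j
      have hk := key_ineq Γ σ hΓ1 hΓ2 (ρ i j) (p i j) (hρ i j) (hp i j)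
        (v i j) (w j) vs (hv i j) (hw j) hvs ρs hρs
      have := hphiL (stateOf Γ (ρ i j) (p i j) (v i j)
          + ∑ k, (w j) k • fluxOf Γ (ρ i j) (p i j) (v i j) k)
      linarith
    -- sum of the lower bounds equals -(∑ s) * exp σ * ρs^Γ
    have hwsum : ∑ j, s j * ⟪w j, vs⟫ = 0 := by
      have h1 : ∑ j, s j * ⟪w j, vs⟫ = ⟪∑ j, s j • w j, vs⟫ := by
        rw [sum_inner]
        exact Finset.sum_congr rfl (fun j _ => (real_inner_smul_left _ _ _).symm)
      have h2 : ∑ j, s j • w j = (0 : EuclideanSpace ℝ (Fin d)) := by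
        calc ∑ j, s j • w j = (-α⁻¹) • ∑ j, s j • ξ j := by
              rw [Finset.smul_sum]
              refine Finset.sum_congr rfl (fun j _ => ?_)
              rw [hwdef, smul_comm]
          _ = 0 := by rw [hsum, smul_zero]
      rw [h1, h2, inner_zero_left]
    have hval : ∑ j, ∑ i, (s j * ω i)
          * (-(Real.exp σ * ⟪w j, vs⟫ * ρs^Γ) - Real.exp σ * ρs^Γ)
        = -(∑ j, s j) * Real.exp σ * ρs^Γ := by
      have hinner : ∀ j, ∑ i, (s j * ω i)
            * (-(Real.exp σ * ⟪w j, vs⟫ * ρs^Γ) - Real.exp σ * ρs^Γ)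
          = s j * (-(Real.exp σ * ⟪w j, vs⟫ * ρs^Γ) - Real.exp σ * ρs^Γ) := by
        intro j
        rw [← Finset.sum_mul]
        rw [← Finset.mul_sum, hω1, mul_one]
      rw [Finset.sum_congr rfl (fun j _ => hinner j)]
      have : ∀ j, s j * (-(Real.exp σ * ⟪w j, vs⟫ * ρs^Γ) - Real.exp σ * ρs^Γ)
          = (-(Real.exp σ * ρs^Γ)) * (s j * ⟪w j, vs⟫) + (-(Real.exp σ * ρs^Γ)) * s j := by
        intro j; ring
      rw [Finset.sum_congr rfl (fun j _ => this j), Finset.sum_add_distrib,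
        ← Finset.mul_sum, ← Finset.mul_sum, hwsum]
      ring
    -- combine
    have hsums : -(∑ j, s j) * Real.exp σ * ρs^Γ
        ≤ ∑ j, ∑ i, (s j * ω i) * L (stateOf Γ (ρ i j) (p i j) (v i j)
          + ∑ k, (w j) k • fluxOf Γ (ρ i j) (p i j) (v i j) k) := by
      rw [← hval]
      refine Finset.sum_le_sum (fun j _ => Finset.sum_le_sum (fun i _ => ?_))
      exact mul_le_mul_of_nonneg_left (hLbd i j)
        (mul_nonneg (hs j).le (hω i).le)
    have hfin := mul_le_mul_of_nonneg_left hsums (inv_nonneg.mpr hS.le)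
    have hcancel : (∑ j, s j)⁻¹ * (-(∑ j, s j) * Real.exp σ * ρs^Γ)
        = -(Real.exp σ * ρs^Γ) := by
      field_simp
    rw [hcancel] at hfin
    linarith
end
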